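/- arXiv:2301.10630 — 6 statements merged into one kernel-verified Lean document; each statement's English description precedes it below -/
import Mathlib

section
/- Let m ⊆ ℱ be a sub-σ-algebra. For P-almost every ω, the map ε ↦ (E_P[Y | m](ω) + ε E_P[Y s | m](ω)) / (1 + ε E_P[s | m](ω)), defined for |ε| < 1/‖s‖∞ (where the denominator is positive), is differentiable at ε = 0 with derivative equal to E_P[s (Y − E_P[Y | m]) | m](ω). (This map is, for each ε, a version of the conditional expectation of Y given m under the tilted measure P_ε.) -/
open MeasureTheory

/-! Conditioning on `m` pulls the `m`-measurable factor `E[Y | m]` out of `E[s E[Y | m] | m]`, so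
the claimed derivative is a.e. `b - a c` with `a = E[Y | m]`, `b = E[Y s | m]`, `c = E[s | m]`;
and `b - a c` is the derivative at `0` of `ε ↦ (a + ε b) / (1 + ε c)` by the quotient rule. -/

theorem hasDerivAt_add_mul_div_one_add_mul_zero {𝕜 : Type*} [NontriviallyNormedField 𝕜]
    (a b c : 𝕜) :
    HasDerivAt (fun ε : 𝕜 => (a + ε * b) / (1 + ε * c)) (b - a * c) 0 := by
  have hnum : HasDerivAt (fun ε : 𝕜 => a + ε * b) b 0 := by
    simpa using ((hasDerivAt_id (0 : 𝕜)).mul_const b).const_add a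
  have hden : HasDerivAt (fun ε : 𝕜 => 1 + ε * c) c 0 := by
    simpa using ((hasDerivAt_id (0 : 𝕜)).mul_const c).const_add 1
  simpa using hnum.fun_div hden (by simp)

theorem condExp_mul_sub_condExp {Ω : Type*} {m mΩ : MeasurableSpace Ω} {μ : Measure Ω}
    {Y s : Ω → ℝ} {C : ℝ} (hY : Integrable Y μ) (hs : Integrable s μ)
    (hsC : ∀ᵐ ω ∂μ, ‖s ω‖ ≤ C) :
    μ[fun ω => s ω * (Y ω - μ[Y|m] ω)|m] =ᵐ[μ] μ[fun ω => Y ω * s ω|m] - μ[Y|m] * μ[s|m] := by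
  have hYs : Integrable (fun ω => Y ω * s ω) μ := hY.mul_bdd hs.aestronglyMeasurable hsC
  have hcYs : Integrable (μ[Y|m] * s) μ :=
    integrable_condExp.mul_bdd hs.aestronglyMeasurable hsC
  have hsplit : (fun ω => s ω * (Y ω - μ[Y|m] ω)) = (fun ω => Y ω * s ω) - μ[Y|m] * s := by
    funext ω
    simp only [Pi.sub_apply, Pi.mul_apply]
    ring
  rw [hsplit]
  filter_upwards [condExp_sub hYs hcYs m,
    condExp_mul_of_stronglyMeasurable_left stronglyMeasurable_condExp hcYs hs] with ω hsub hpull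
  rw [hsub, Pi.sub_apply, Pi.sub_apply, hpull]

theorem stmt_1_general
    {Ω : Type*} [mΩ : MeasurableSpace Ω] (P : Measure Ω) [IsProbabilityMeasure P]
    (Y : Ω → ℝ) (hYm : Measurable Y) (hYb : ∃ C, ∀ ω, |Y ω| ≤ C)
    (s : Ω → ℝ) (hsm : Measurable s) (hsb : ∃ C, ∀ ω, |s ω| ≤ C)
    (m : MeasurableSpace Ω) :
    ∀ᵐ ω ∂P,
      HasDerivAt
        (fun ε : ℝ => ((P[Y|m]) ω + ε * (P[fun ω' => Y ω' * s ω'|m]) ω) /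
          (1 + ε * (P[s|m]) ω))
        ((P[fun ω' => s ω' * (Y ω' - (P[Y|m]) ω')|m]) ω) 0 := by
  obtain ⟨CY, hCY⟩ := hYb
  obtain ⟨Cs, hCs⟩ := hsb
  have hY : Integrable Y P :=
    .of_bound hYm.aestronglyMeasurable CY (ae_of_all _ fun ω => by simpa using hCY ω)
  have hsC : ∀ᵐ ω ∂P, ‖s ω‖ ≤ Cs := ae_of_all _ fun ω => by simpa using hCs ω
  have hs : Integrable s P := .of_bound hsm.aestronglyMeasurable Cs hsC
  filter_upwards [condExp_mul_sub_condExp (m := m) hY hs hsC] with ω hω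
  rw [hω]
  exact hasDerivAt_add_mul_div_one_add_mul_zero _ _ _

/-- Let `m ⊆ ℱ` be a sub-σ-algebra. For `P`-a.e. `ω`, the map
`ε ↦ (E_P[Y | m](ω) + ε E_P[Y s | m](ω)) / (1 + ε E_P[s | m](ω))` (which is, for each `ε`
with `|ε| < 1/‖s‖∞`, a version of the conditional expectation of `Y` given `m` under the
tilted measure `P_ε`) is differentiable at `ε = 0` with derivative
`E_P[s (Y − E_P[Y | m]) | m](ω)`. -/
theorem stmt_1
    {Ω : Type*} [mΩ : MeasurableSpace Ω] (P : Measure Ω) [IsProbabilityMeasure P]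
    (Y : Ω → ℝ) (hYm : Measurable Y) (hYb : ∃ C, ∀ ω, |Y ω| ≤ C)
    (s : Ω → ℝ) (hsm : Measurable s) (hsb : ∃ C, ∀ ω, |s ω| ≤ C)
    (hs0 : ∫ ω, s ω ∂P = 0)
    (hsnorm : 0 < (eLpNorm s ⊤ P).toReal)
    (m : MeasurableSpace Ω) (hm : m ≤ mΩ) :
    ∀ᵐ ω ∂P,
      HasDerivAt
        (fun ε : ℝ => ((P[Y|m]) ω + ε * (P[fun ω' => Y ω' * s ω'|m]) ω) /
          (1 + ε * (P[s|m]) ω))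
        ((P[fun ω' => s ω' * (Y ω' - (P[Y|m]) ω')|m]) ω) 0 :=
  stmt_1_general (mΩ := mΩ) P Y hYm hYb s hsm hsb m
end

section
/- Fix a ∈ {0,1}. For P-almost every ω, the map ε ↦ Q̄_ε^{(a)}(X)(ω), defined for |ε| < 1/‖s‖∞, is differentiable at ε = 0 with derivative E_P[ s · (𝟙{A=a} / g(a,X)) · (Y − Q̄^{(a)}(X)) | σ(X) ](ω). -/
open MeasureTheory

theorem stmt3_aux {Ω : Type*} [m0 : MeasurableSpace Ω]
    (P : Measure Ω) [IsProbabilityMeasure P]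
    (mX : MeasurableSpace Ω) (hm : mX ≤ m0)
    (I Y s g : Ω → ℝ)
    (hIm : Measurable[m0] I) (hYm : Measurable[m0] Y) (hsm : Measurable[m0] s)
    (hgm : Measurable[mX] g)
    (CI Cy Cs : ℝ) (hCI0 : 0 ≤ CI) (hCy0 : 0 ≤ Cy) (hCs0 : 0 ≤ Cs)
    (hIb : ∀ ω, |I ω| ≤ CI) (hCy : ∀ ω, |Y ω| ≤ Cy) (hCs : ∀ ω, |s ω| ≤ Cs)
    (δ : ℝ) (hδ : 0 < δ) (hgb : ∀ᵐ ω ∂P, δ ≤ g ω) :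
    ∀ᵐ ω ∂P,
      HasDerivAt
        (fun ε : ℝ =>
          ((P[fun ω' => I ω' * Y ω'|mX]) ω + ε * (P[fun ω' => I ω' * Y ω' * s ω'|mX]) ω) /
            (g ω + ε * (P[fun ω' => I ω' * s ω'|mX]) ω))
        ((P[fun ω' => s ω' * (I ω' / g ω') *
            (Y ω' - (P[fun ω'' => I ω'' * Y ω''|mX]) ω' / g ω')|mX]) ω)
        0 := by
  set N : Ω → ℝ := P[fun ω' => I ω' * Y ω'|mX] with hNdef
  set N' : Ω → ℝ := P[fun ω' => I ω' * Y ω' * s ω'|mX] with hN'def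
  set D' : Ω → ℝ := P[fun ω' => I ω' * s ω'|mX] with hD'def
  -- helper: bounded measurable implies integrable
  have hint : ∀ (f : Ω → ℝ) (C : ℝ), Measurable[m0] f → (∀ᵐ ω ∂P, |f ω| ≤ C) →
      Integrable f P := fun f C hf hC =>
    (integrable_const C).mono' hf.aestronglyMeasurable
      (hC.mono fun ω h => by simpa [Real.norm_eq_abs] using h)
  have hIYb : ∀ ω, |I ω * Y ω| ≤ CI * Cy := fun ω => by
    rw [abs_mul]; exact mul_le_mul (hIb ω) (hCy ω) (abs_nonneg _) hCI0
  have hIYsb : ∀ ω, |I ω * Y ω * s ω| ≤ CI * Cy * Cs := fun ω => by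
    rw [abs_mul]
    exact mul_le_mul (hIYb ω) (hCs ω) (abs_nonneg _) (by positivity)
  have hIsb : ∀ ω, |I ω * s ω| ≤ CI * Cs := fun ω => by
    rw [abs_mul]; exact mul_le_mul (hIb ω) (hCs ω) (abs_nonneg _) hCI0
  have hIYm : Measurable[m0] fun ω => I ω * Y ω := hIm.mul hYm
  have hIYsm : Measurable[m0] fun ω => I ω * Y ω * s ω := hIYm.mul hsm
  have hIsm : Measurable[m0] fun ω => I ω * s ω := hIm.mul hsm
  -- a.e. bound on N
  have hNb : ∀ᵐ ω ∂P, |N ω| ≤ CI * Cy := by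
    have h := ae_bdd_condExp_of_ae_bdd (m := mX) (μ := P)
      (R := ⟨CI * Cy, by positivity⟩) (f := fun ω => I ω * Y ω)
      (Filter.Eventually.of_forall hIYb)
    exact h
  have hgδ : g =ᵐ[P] g := Filter.EventuallyEq.rfl
  -- measurability of multipliers
  have hk1 : StronglyMeasurable[mX] fun ω => (g ω)⁻¹ := hgm.inv.stronglyMeasurable
  have hNm : Measurable[mX] N := stronglyMeasurable_condExp.measurable
  have hk2 : StronglyMeasurable[mX] fun ω => N ω / g ω ^ 2 :=
    (hNm.div (hgm.pow_const 2)).stronglyMeasurable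
  -- integrability
  have hint1 : Integrable (fun ω => (g ω)⁻¹ * (I ω * Y ω * s ω)) P := by
    refine hint _ (δ⁻¹ * (CI * Cy * Cs)) (((hgm.mono hm le_rfl).inv).mul hIYsm) ?_
    filter_upwards [hgb] with ω hg
    rw [abs_mul, abs_inv]
    refine mul_le_mul ?_ (hIYsb ω) (abs_nonneg _) (by positivity)
    rw [abs_of_pos (lt_of_lt_of_le hδ hg)]
    exact inv_anti₀ hδ hg
  have hint2 : Integrable (fun ω => N ω / g ω ^ 2 * (I ω * s ω)) P := by
    refine hint _ (CI * Cy / δ ^ 2 * (CI * Cs))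
      (((hNm.mono hm le_rfl).div ((hgm.mono hm le_rfl).pow_const 2)).mul hIsm) ?_
    filter_upwards [hgb, hNb] with ω hg hN
    rw [abs_mul, abs_div]
    refine mul_le_mul ?_ (hIsb ω) (abs_nonneg _) (by positivity)
    have hg2 : δ ^ 2 ≤ |g ω ^ 2| := by
      rw [abs_of_nonneg (by positivity)]
      exact pow_le_pow_left₀ hδ.le hg 2
    exact div_le_div₀ (by positivity) hN (by positivity) hg2
  have hintIYs : Integrable (fun ω => I ω * Y ω * s ω) P :=
    hint _ _ hIYsm (Filter.Eventually.of_forall hIYsb)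
  have hintIs : Integrable (fun ω => I ω * s ω) P :=
    hint _ _ hIsm (Filter.Eventually.of_forall hIsb)
  -- the key conditional-expectation identity
  have key : (P[fun ω' => s ω' * (I ω' / g ω') * (Y ω' - N ω' / g ω')|mX])
      =ᵐ[P] fun ω => (g ω)⁻¹ * N' ω - N ω / g ω ^ 2 * D' ω := by
    have heq : (fun ω' => s ω' * (I ω' / g ω') * (Y ω' - N ω' / g ω'))
        =ᵐ[P] fun ω' => (g ω')⁻¹ * (I ω' * Y ω' * s ω') - N ω' / g ω' ^ 2 * (I ω' * s ω') := by
      filter_upwards [hgb] with ω hg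
      have hg0 : g ω ≠ 0 := ne_of_gt (lt_of_lt_of_le hδ hg)
      field_simp
    calc P[fun ω' => s ω' * (I ω' / g ω') * (Y ω' - N ω' / g ω')|mX]
        =ᵐ[P] P[(fun ω' => (g ω')⁻¹ * (I ω' * Y ω' * s ω')) -
            (fun ω' => N ω' / g ω' ^ 2 * (I ω' * s ω'))|mX] := condExp_congr_ae heq
      _ =ᵐ[P] P[fun ω' => (g ω')⁻¹ * (I ω' * Y ω' * s ω')|mX] -
            P[fun ω' => N ω' / g ω' ^ 2 * (I ω' * s ω')|mX] := condExp_sub hint1 hint2 mX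
      _ =ᵐ[P] (fun ω => (g ω)⁻¹ * N' ω) - fun ω => N ω / g ω ^ 2 * D' ω := by
          exact Filter.EventuallyEq.sub
            (condExp_mul_of_stronglyMeasurable_left hk1 hint1 hintIYs)
            (condExp_mul_of_stronglyMeasurable_left hk2 hint2 hintIs)
      _ = fun ω => (g ω)⁻¹ * N' ω - N ω / g ω ^ 2 * D' ω := rfl
  -- conclude
  filter_upwards [hgb, key] with ω hg hkey
  have hg0 : (0:ℝ) < g ω := lt_of_lt_of_le hδ hg
  have hne : g ω + (0:ℝ) * D' ω ≠ 0 := by simpa using ne_of_gt hg0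
  have hnum : HasDerivAt (fun ε : ℝ => N ω + ε * N' ω) (N' ω) 0 := by
    simpa using ((hasDerivAt_id (0:ℝ)).mul_const (N' ω)).const_add (N ω)
  have hden : HasDerivAt (fun ε : ℝ => g ω + ε * D' ω) (D' ω) 0 := by
    simpa using ((hasDerivAt_id (0:ℝ)).mul_const (D' ω)).const_add (g ω)
  have h := hnum.div hden hne
  refine h.congr_deriv ?_
  rw [hkey]
  have hg0' : g ω ≠ 0 := ne_of_gt hg0
  field_simp
  ring

theorem stmt_3
    {Ω 𝒳 : Type*} (mX : MeasurableSpace Ω) [MeasurableSpace Ω] [MeasurableSpace 𝒳]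
    (P : Measure Ω) [IsProbabilityMeasure P]
    (X : Ω → 𝒳) (hX : Measurable X)
    (A : Ω → Bool) (hA : Measurable A)
    (Y : Ω → ℝ) (hYm : Measurable Y) (hYb : ∃ C, ∀ ω, |Y ω| ≤ C)
    (hmX : mX = MeasurableSpace.comap X inferInstance)
    (g : Bool → Ω → ℝ) (hgm : ∀ a, Measurable[mX] (g a))
    (hgv : ∀ a, g a =ᵐ[P] P[fun ω => if A ω = a then (1:ℝ) else 0|mX])
    (δ : ℝ) (hδ : 0 < δ) (hgb : ∀ a, ∀ᵐ ω ∂P, δ ≤ g a ω ∧ g a ω ≤ 1 - δ)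
    (Qbar : Bool → Ω → ℝ)
    (hQbar : ∀ a ω, Qbar a ω
      = (P[fun ω' => (if A ω' = a then (1:ℝ) else 0) * Y ω'|mX]) ω / g a ω)
    (s : Ω → ℝ) (hsm : Measurable s) (hsb : ∃ C, ∀ ω, |s ω| ≤ C)
    (hs0 : ∫ ω, s ω ∂P = 0) (hsnorm : 0 < (eLpNorm s ⊤ P).toReal)
    (a : Bool) :
    ∀ᵐ ω ∂P,
      HasDerivAt
        (fun ε : ℝ =>
          ((P[fun ω' => (if A ω' = a then (1:ℝ) else 0) * Y ω'|mX]) ω +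
              ε * (P[fun ω' => (if A ω' = a then (1:ℝ) else 0) * Y ω' * s ω'|mX]) ω) /
            (g a ω + ε * (P[fun ω' => (if A ω' = a then (1:ℝ) else 0) * s ω'|mX]) ω))
        ((P[fun ω' => s ω' * ((if A ω' = a then (1:ℝ) else 0) / g a ω') * (Y ω' - Qbar a ω')|mX]) ω)
        0 := by
  obtain ⟨Cy, hCy⟩ := hYb
  obtain ⟨Cs, hCs⟩ := hsb
  have hm : mX ≤ _ := hmX ▸ measurable_iff_comap_le.mp hX
  have hQ : (fun ω' => s ω' * ((if A ω' = a then (1:ℝ) else 0) / g a ω') * (Y ω' - Qbar a ω'))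
      = fun ω' => s ω' * ((if A ω' = a then (1:ℝ) else 0) / g a ω') *
          (Y ω' - (P[fun ω'' => (if A ω'' = a then (1:ℝ) else 0) * Y ω''|mX]) ω' / g a ω') :=
    funext fun ω' => by rw [hQbar]
  rw [hQ]
  exact stmt3_aux (m0 := _) P mX hm (fun ω => if A ω = a then (1:ℝ) else 0) Y s (g a)
    ((Measurable.of_discrete (f := fun b => if b = a then (1:ℝ) else 0)).comp hA) hYm hsm (hgm a) 1 (max Cy 0) (max Cs 0) one_pos.le (le_max_right _ _) (le_max_right _ _)
    (fun ω => by by_cases h : A ω = a <;> simp [h]) (fun ω => (hCy ω).trans (le_max_left _ _))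
    (fun ω => (hCs ω).trans (le_max_left _ _)) δ hδ ((hgb a).mono fun ω h => h.1)
end

section
/- (Conditional efficient influence function of the CATE.) For P-almost every ω, the map ε ↦ Ψ_ε(X)(ω) = Q̄_ε^{(1)}(X)(ω) − Q̄_ε^{(0)}(X)(ω), defined for |ε| < 1/‖s‖∞, is differentiable at ε = 0 with derivative E_P[ s · Δ* | σ(X) ](ω), where Δ*(O) := (𝟙{A=1}/g(1,X) − 𝟙{A=0}/g(0,X)) (Y − Q̄^{(A)}(X)). -/
open MeasureTheory

/-- (Conditional efficient influence function of the CATE.) For `P`-a.e. `ω`,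
the map `ε ↦ Ψ_ε(X)(ω) = Q̄_ε^{(1)}(X)(ω) − Q̄_ε^{(0)}(X)(ω)` — realized through the version
`(E_P[𝟙{A=a} Y | σ(X)] + ε E_P[𝟙{A=a} Y s | σ(X)]) / (g(a,X) + ε E_P[𝟙{A=a} s | σ(X)])`
of each tilted conditional mean — is differentiable at `ε = 0` with derivative
`E_P[ s · Δ* | σ(X) ](ω)`, where
`Δ*(O) = (𝟙{A=1}/g(1,X) − 𝟙{A=0}/g(0,X)) (Y − Q̄^{(A)}(X))`. -/
theorem stmt_4
    {Ω 𝒳 : Type*} (mX : MeasurableSpace Ω) [MeasurableSpace Ω] [MeasurableSpace 𝒳]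
    (P : Measure Ω) [IsProbabilityMeasure P]
    (X : Ω → 𝒳) (hX : Measurable X)
    (A : Ω → Bool) (hA : Measurable A)
    (Y : Ω → ℝ) (hYm : Measurable Y) (hYb : ∃ C, ∀ ω, |Y ω| ≤ C)
    (hmX : mX = MeasurableSpace.comap X inferInstance)
    (g : Bool → Ω → ℝ) (hgm : ∀ a, Measurable[mX] (g a))
    (hgv : ∀ a, g a =ᵐ[P] P[fun ω => if A ω = a then (1:ℝ) else 0|mX])
    (δ : ℝ) (hδ : 0 < δ) (hgb : ∀ a, ∀ᵐ ω ∂P, δ ≤ g a ω ∧ g a ω ≤ 1 - δ)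
    (Qbar : Bool → Ω → ℝ)
    (hQbar : ∀ a ω, Qbar a ω
      = (P[fun ω' => (if A ω' = a then (1:ℝ) else 0) * Y ω'|mX]) ω / g a ω)
    (QbarA : Ω → ℝ)
    (hQbarA : ∀ ω, QbarA ω
      = (if A ω = true then (1:ℝ) else 0) * Qbar true ω
        + (if A ω = false then (1:ℝ) else 0) * Qbar false ω)
    (Δstar : Ω → ℝ)
    (hΔstar : ∀ ω, Δstar ω
      = ((if A ω = true then (1:ℝ) else 0) / g true ω
          - (if A ω = false then (1:ℝ) else 0) / g false ω) * (Y ω - QbarA ω))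
    (s : Ω → ℝ) (hsm : Measurable s) (hsb : ∃ C, ∀ ω, |s ω| ≤ C)
    (hs0 : ∫ ω, s ω ∂P = 0) (hsnorm : 0 < (eLpNorm s ⊤ P).toReal) :
    ∀ᵐ ω ∂P,
      HasDerivAt
        (fun ε : ℝ =>
          ((P[fun ω' => (if A ω' = true then (1:ℝ) else 0) * Y ω'|mX]) ω +
              ε * (P[fun ω' => (if A ω' = true then (1:ℝ) else 0) * Y ω' * s ω'|mX]) ω) /
            (g true ω + ε * (P[fun ω' => (if A ω' = true then (1:ℝ) else 0) * s ω'|mX]) ω) -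
          ((P[fun ω' => (if A ω' = false then (1:ℝ) else 0) * Y ω'|mX]) ω +
              ε * (P[fun ω' => (if A ω' = false then (1:ℝ) else 0) * Y ω' * s ω'|mX]) ω) /
            (g false ω + ε * (P[fun ω' => (if A ω' = false then (1:ℝ) else 0) * s ω'|mX]) ω))
        ((P[fun ω' => s ω' * Δstar ω'|mX]) ω) 0 := by
  rename_i mΩ m𝒳 hPP
  obtain ⟨Cy, hCy⟩ := hYb
  obtain ⟨Cs, hCs⟩ := hsb
  have hm : mX ≤ mΩ := by rw [hmX]; exact hX.comap_le
  have hsm' : Measurable[mΩ] s := hsm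
  have hΩ : Nonempty Ω := by
    rcases isEmpty_or_nonempty Ω with h | h
    · have h1 := measure_univ (μ := P)
      rw [Set.univ_eq_empty_iff.mpr h, measure_empty] at h1
      exact absurd h1 (by norm_num)
    · exact h
  have hCy0 : 0 ≤ Cy := (abs_nonneg _).trans (hCy (Classical.arbitrary Ω))
  have hCs0 : 0 ≤ Cs := (abs_nonneg _).trans (hCs (Classical.arbitrary Ω))
  -- bounded measurable functions are integrable
  have hint : ∀ (f : Ω → ℝ) (C : ℝ), Measurable[mΩ] f → (∀ ω, |f ω| ≤ C) → Integrable f P :=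
    fun f C hf hC => by
      refine ⟨hf.aestronglyMeasurable, ?_⟩
      exact HasFiniteIntegral.of_bounded (C := C)
        (Filter.Eventually.of_forall fun ω => by simpa [Real.norm_eq_abs] using hC ω)
  have hindm : ∀ a : Bool, Measurable[mΩ] fun ω => if A ω = a then (1:ℝ) else 0 := fun a =>
    Measurable.ite (hA (MeasurableSet.singleton a)) measurable_const measurable_const
  have hindb : ∀ (a : Bool) ω, |if A ω = a then (1:ℝ) else 0| ≤ 1 := by
    intro a ω; split <;> norm_num
  -- integrability of the three classes of functions
  have hNint : ∀ a : Bool,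
      Integrable (fun ω' => (if A ω' = a then (1:ℝ) else 0) * Y ω') P := by
    intro a
    refine hint _ Cy ((hindm a).mul hYm) fun ω => ?_
    calc |(if A ω = a then (1:ℝ) else 0) * Y ω|
        = |if A ω = a then (1:ℝ) else 0| * |Y ω| := abs_mul _ _
      _ ≤ 1 * Cy := mul_le_mul (hindb a ω) (hCy ω) (abs_nonneg _) zero_le_one
      _ = Cy := one_mul _
  have hMint : ∀ a : Bool,
      Integrable (fun ω' => (if A ω' = a then (1:ℝ) else 0) * Y ω' * s ω') P := by
    intro a
    refine hint _ (Cy * Cs) (((hindm a).mul hYm).mul hsm') fun ω => ?_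
    have h1 : |(if A ω = a then (1:ℝ) else 0) * Y ω| ≤ Cy := by
      calc |(if A ω = a then (1:ℝ) else 0) * Y ω|
          = |if A ω = a then (1:ℝ) else 0| * |Y ω| := abs_mul _ _
        _ ≤ 1 * Cy := mul_le_mul (hindb a ω) (hCy ω) (abs_nonneg _) zero_le_one
        _ = Cy := one_mul _
    calc |(if A ω = a then (1:ℝ) else 0) * Y ω * s ω|
        = |(if A ω = a then (1:ℝ) else 0) * Y ω| * |s ω| := abs_mul _ _
      _ ≤ Cy * Cs := mul_le_mul h1 (hCs ω) (abs_nonneg _) hCy0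
  have hHint : ∀ a : Bool,
      Integrable (fun ω' => (if A ω' = a then (1:ℝ) else 0) * s ω') P := by
    intro a
    refine hint _ Cs ((hindm a).mul hsm') fun ω => ?_
    calc |(if A ω = a then (1:ℝ) else 0) * s ω|
        = |if A ω = a then (1:ℝ) else 0| * |s ω| := abs_mul _ _
      _ ≤ 1 * Cs := mul_le_mul (hindb a ω) (hCs ω) (abs_nonneg _) zero_le_one
      _ = Cs := one_mul _
  -- a.e. bound on the conditional expectation of 𝟙{A=a} Y
  have hNb : ∀ a : Bool, ∀ᵐ ω ∂P,
      |(P[fun ω' => (if A ω' = a then (1:ℝ) else 0) * Y ω'|mX]) ω| ≤ Cy := by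
    intro a
    have := ae_bdd_condExp_of_ae_bdd (m := mX) (μ := P) (R := ⟨Cy, hCy0⟩)
      (f := fun ω' => (if A ω' = a then (1:ℝ) else 0) * Y ω')
      (Filter.Eventually.of_forall fun ω => by
        calc |(if A ω = a then (1:ℝ) else 0) * Y ω|
            = |if A ω = a then (1:ℝ) else 0| * |Y ω| := abs_mul _ _
          _ ≤ 1 * Cy := mul_le_mul (hindb a ω) (hCy ω) (abs_nonneg _) zero_le_one
          _ = Cy := one_mul _)
    exact this
  -- strong measurability
  have hQsm : ∀ a : Bool, StronglyMeasurable[mX] (Qbar a) := by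
    intro a
    have h1 : Qbar a = fun ω =>
        (P[fun ω' => (if A ω' = a then (1:ℝ) else 0) * Y ω'|mX]) ω * (g a ω)⁻¹ := by
      funext ω; rw [hQbar a ω, div_eq_mul_inv]
    rw [h1]
    exact stronglyMeasurable_condExp.mul ((hgm a).inv.stronglyMeasurable)
  have hcsm : ∀ a : Bool, StronglyMeasurable[mX] fun ω => (g a ω)⁻¹ := fun a =>
    (hgm a).inv.stronglyMeasurable
  have hdsm : ∀ a : Bool, StronglyMeasurable[mX] fun ω => Qbar a ω * (g a ω)⁻¹ := fun a =>
    (hQsm a).mul ((hgm a).inv.stronglyMeasurable)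
  -- a.e. bounds for the multipliers
  have hcb : ∀ a : Bool, ∀ᵐ ω ∂P, ‖(g a ω)⁻¹‖ ≤ δ⁻¹ := by
    intro a
    filter_upwards [hgb a] with ω hg
    have hpos : 0 < g a ω := hδ.trans_le hg.1
    rw [Real.norm_eq_abs, abs_inv, abs_of_pos hpos]
    exact inv_anti₀ hδ hg.1
  have hdb : ∀ a : Bool, ∀ᵐ ω ∂P, ‖Qbar a ω * (g a ω)⁻¹‖ ≤ (Cy / δ) * δ⁻¹ := by
    intro a
    filter_upwards [hgb a, hNb a] with ω hg hN
    have hpos : 0 < g a ω := hδ.trans_le hg.1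
    have hQb : |Qbar a ω| ≤ Cy / δ := by
      rw [hQbar a ω, abs_div]
      exact div_le_div₀ hCy0 hN hδ (by rw [abs_of_pos hpos]; exact hg.1)
    have hinvb : |(g a ω)⁻¹| ≤ δ⁻¹ := by
      rw [abs_inv, abs_of_pos hpos]; exact inv_anti₀ hδ hg.1
    rw [Real.norm_eq_abs, abs_mul]
    exact mul_le_mul hQb hinvb (abs_nonneg _) (div_nonneg hCy0 hδ.le)
  -- integrability of the products
  have hcMint : ∀ a : Bool,
      Integrable ((fun ω => (g a ω)⁻¹) *
        fun ω' => (if A ω' = a then (1:ℝ) else 0) * Y ω' * s ω') P := fun a =>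
    Integrable.bdd_mul (hMint a) (((hcsm a).mono hm).aestronglyMeasurable) (hcb a)
  have hdHint : ∀ a : Bool,
      Integrable ((fun ω => Qbar a ω * (g a ω)⁻¹) *
        fun ω' => (if A ω' = a then (1:ℝ) else 0) * s ω') P := fun a =>
    Integrable.bdd_mul (hHint a) (((hdsm a).mono hm).aestronglyMeasurable) (hdb a)
  -- pull-out property for each piece
  have key : ∀ a : Bool,
      P[((fun ω => (g a ω)⁻¹) * fun ω' => (if A ω' = a then (1:ℝ) else 0) * Y ω' * s ω')
          - ((fun ω => Qbar a ω * (g a ω)⁻¹) *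
              fun ω' => (if A ω' = a then (1:ℝ) else 0) * s ω')|mX]
        =ᵐ[P]
      (fun ω => (g a ω)⁻¹) * P[fun ω' => (if A ω' = a then (1:ℝ) else 0) * Y ω' * s ω'|mX]
        - (fun ω => Qbar a ω * (g a ω)⁻¹) *
            P[fun ω' => (if A ω' = a then (1:ℝ) else 0) * s ω'|mX] := by
    intro a
    refine (condExp_sub (hcMint a) (hdHint a) mX).trans ?_
    exact Filter.EventuallyEq.sub
      (condExp_mul_of_stronglyMeasurable_left (hcsm a) (hcMint a) (hMint a))
      (condExp_mul_of_stronglyMeasurable_left (hdsm a) (hdHint a) (hHint a))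
  -- decompose s · Δ* pointwise
  have hsplit : (fun ω' => s ω' * Δstar ω')
      = ((fun ω => (g true ω)⁻¹) * fun ω' => (if A ω' = true then (1:ℝ) else 0) * Y ω' * s ω')
          - ((fun ω => Qbar true ω * (g true ω)⁻¹) *
              fun ω' => (if A ω' = true then (1:ℝ) else 0) * s ω')
        - (((fun ω => (g false ω)⁻¹) *
              fun ω' => (if A ω' = false then (1:ℝ) else 0) * Y ω' * s ω')
            - ((fun ω => Qbar false ω * (g false ω)⁻¹) *
                fun ω' => (if A ω' = false then (1:ℝ) else 0) * s ω')) := by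
    funext ω
    simp only [Pi.sub_apply, Pi.mul_apply, hΔstar ω, hQbarA ω]
    cases hAw : A ω <;> simp [div_eq_mul_inv] <;> ring
  -- the main conditional-expectation identity
  have hfinal : P[fun ω' => s ω' * Δstar ω'|mX] =ᵐ[P] fun ω =>
      ((g true ω)⁻¹ *
          (P[fun ω' => (if A ω' = true then (1:ℝ) else 0) * Y ω' * s ω'|mX]) ω
        - Qbar true ω * (g true ω)⁻¹ *
            (P[fun ω' => (if A ω' = true then (1:ℝ) else 0) * s ω'|mX]) ω)
      - ((g false ω)⁻¹ *
            (P[fun ω' => (if A ω' = false then (1:ℝ) else 0) * Y ω' * s ω'|mX]) ω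
          - Qbar false ω * (g false ω)⁻¹ *
              (P[fun ω' => (if A ω' = false then (1:ℝ) else 0) * s ω'|mX]) ω) := by
    rw [hsplit]
    refine (condExp_sub ((hcMint true).sub (hdHint true))
      ((hcMint false).sub (hdHint false)) mX).trans ?_
    filter_upwards [key true, key false] with ω h1 h0
    simp only [Pi.sub_apply, Pi.mul_apply] at h1 h0 ⊢
    rw [h1, h0]
  -- pointwise conclusion
  filter_upwards [hfinal, hgb true, hgb false] with ω hEq hg1 hg0
  have hg1pos : 0 < g true ω := hδ.trans_le hg1.1
  have hg0pos : 0 < g false ω := hδ.trans_le hg0.1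
  have hg1ne : g true ω ≠ 0 := hg1pos.ne'
  have hg0ne : g false ω ≠ 0 := hg0pos.ne'
  set N1 := (P[fun ω' => (if A ω' = true then (1:ℝ) else 0) * Y ω'|mX]) ω with hN1
  set M1 := (P[fun ω' => (if A ω' = true then (1:ℝ) else 0) * Y ω' * s ω'|mX]) ω with hM1
  set H1 := (P[fun ω' => (if A ω' = true then (1:ℝ) else 0) * s ω'|mX]) ω with hH1
  set N0 := (P[fun ω' => (if A ω' = false then (1:ℝ) else 0) * Y ω'|mX]) ω with hN0
  set M0 := (P[fun ω' => (if A ω' = false then (1:ℝ) else 0) * Y ω' * s ω'|mX]) ω with hM0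
  set H0 := (P[fun ω' => (if A ω' = false then (1:ℝ) else 0) * s ω'|mX]) ω with hH0
  set g1 := g true ω with hg1d
  set g0 := g false ω with hg0d
  have hQ1 : Qbar true ω = N1 / g1 := hQbar true ω
  have hQ0 : Qbar false ω = N0 / g0 := hQbar false ω
  have d1 : HasDerivAt (fun ε : ℝ => (N1 + ε * M1) / (g1 + ε * H1))
      ((M1 * g1 - N1 * H1) / g1 ^ 2) 0 := by
    have hn : HasDerivAt (fun ε : ℝ => N1 + ε * M1) M1 0 := by
      simpa using ((hasDerivAt_id (0:ℝ)).mul_const M1).const_add N1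
    have hd : HasDerivAt (fun ε : ℝ => g1 + ε * H1) H1 0 := by
      simpa using ((hasDerivAt_id (0:ℝ)).mul_const H1).const_add g1
    have := hn.fun_div hd (by simpa using hg1ne)
    simpa using this
  have d0 : HasDerivAt (fun ε : ℝ => (N0 + ε * M0) / (g0 + ε * H0))
      ((M0 * g0 - N0 * H0) / g0 ^ 2) 0 := by
    have hn : HasDerivAt (fun ε : ℝ => N0 + ε * M0) M0 0 := by
      simpa using ((hasDerivAt_id (0:ℝ)).mul_const M0).const_add N0
    have hd : HasDerivAt (fun ε : ℝ => g0 + ε * H0) H0 0 := by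
      simpa using ((hasDerivAt_id (0:ℝ)).mul_const H0).const_add g0
    have := hn.fun_div hd (by simpa using hg0ne)
    simpa using this
  have := d1.fun_sub d0
  refine HasDerivAt.congr_deriv this ?_
  rw [hEq, hQ1, hQ0]
  field_simp
end

section
/- (Causal identification of the CATE.) Suppose additionally that Ω is a standard Borel probability space and that there are bounded measurable potential outcomes Y⁰, Y¹ : Ω → ℝ such that: (consistency) Y = 𝟙{A=1} Y¹ + 𝟙{A=0} Y⁰ almost surely; (positivity) δ ≤ g(a,X) ≤ 1 − δ almost surely for a = 0,1; and (no unmeasured confounders) for each a ∈ {0,1}, Yᵃ and A are conditionally independent given σ(X). Then for each a ∈ {0,1}, E_P[Yᵃ | σ(X)] = Q̄^{(a)}(X) P-almost surely; consequently E_P[Y¹ | σ(X)] − E_P[Y⁰ | σ(X)] = Ψ(X) P-almost surely. -/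
open MeasureTheory ProbabilityTheory

lemma integrable_of_bdd' {Ω : Type*} {m : MeasurableSpace Ω} {P : Measure Ω}
    [IsFiniteMeasure P] {f : Ω → ℝ} (hf : AEStronglyMeasurable f P) {C : ℝ}
    (h : ∀ᵐ ω ∂P, ‖f ω‖ ≤ C) : Integrable f P :=
  Integrable.mono' (integrable_const C) hf h

lemma condexp_indicator_mul_of_condIndepFun
    {Ω : Type*} {mΩ : MeasurableSpace Ω} [StandardBorelSpace Ω]
    {P : Measure Ω} [IsProbabilityMeasure P]
    {mX : MeasurableSpace Ω} (hmXle : mX ≤ mΩ)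
    {A : Ω → Bool} (hA : Measurable[mΩ] A) (a : Bool)
    {F : Ω → ℝ} (hF : Measurable[mΩ] F) {C : ℝ} (hFb : ∀ ω, |F ω| ≤ C)
    (hind : CondIndepFun mX hmXle F A (μ := P)) :
    P[fun ω => (A ⁻¹' {a}).indicator (fun _ => (1:ℝ)) ω * F ω|mX]
      =ᵐ[P] fun ω => (P[(A ⁻¹' {a}).indicator (fun _ => (1:ℝ))|mX]) ω * (P[F|mX]) ω := by
  set I : Ω → ℝ := (A ⁻¹' {a}).indicator (fun _ => (1:ℝ)) with hIdef
  have hAa : MeasurableSet[mΩ] (A ⁻¹' {a}) := hA (measurableSet_singleton a)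
  have hIm : Measurable[mΩ] I := measurable_const.indicator hAa
  have hInn : ∀ ω, 0 ≤ I ω := fun ω => Set.indicator_nonneg (fun _ _ => zero_le_one) ω
  have hIle : ∀ ω, I ω ≤ 1 := by
    intro ω; by_cases h : ω ∈ A ⁻¹' {a} <;> simp [I, Set.indicator_apply, h]
  have hInt : Integrable I P := integrable_of_bdd' (P := P) (hIm.aestronglyMeasurable (μ := P))
    (Filter.Eventually.of_forall fun ω => by
      rw [Real.norm_eq_abs, abs_of_nonneg (hInn ω)]; exact hIle ω)
  have hFint : Integrable F P := integrable_of_bdd' (P := P) (hF.aestronglyMeasurable (μ := P))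
    (Filter.Eventually.of_forall fun ω => by rw [Real.norm_eq_abs]; exact hFb ω)
  have hh0 : 0 ≤ᵐ[P] P[I|mX] := condExp_nonneg (Filter.Eventually.of_forall hInn)
  have hh1 : P[I|mX] ≤ᵐ[P] fun _ => (1:ℝ) := by
    have := condExp_mono (μ := P) (m := mX) hInt (integrable_const (1:ℝ))
      (Filter.Eventually.of_forall hIle)
    rwa [condExp_const hmXle] at this
  have hhb : ∀ᵐ ω ∂P, ‖(P[I|mX]) ω‖ ≤ 1 := by
    filter_upwards [hh0, hh1] with ω h0 h1
    rw [Real.norm_eq_abs, abs_of_nonneg h0]; exact h1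
  have hhm : StronglyMeasurable[mX] (P[I|mX]) := stronglyMeasurable_condExp
  have hhm' : AEStronglyMeasurable[mΩ] (P[I|mX]) P :=
    (hhm.mono hmXle).aestronglyMeasurable (μ := P)
  -- set-level consequence of conditional independence
  have hset : ∀ (u : Set ℝ), MeasurableSet u → ∀ s : Set Ω, MeasurableSet[mX] s →
      ∫ ω in s, I ω * (F ⁻¹' u).indicator (fun _ => (1:ℝ)) ω ∂P
        = ∫ ω in s, (P[I|mX]) ω * (F ⁻¹' u).indicator (fun _ => (1:ℝ)) ω ∂P := by
    intro u hu s hs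
    set J : Ω → ℝ := (F ⁻¹' u).indicator (fun _ => (1:ℝ)) with hJdef
    have hFu : MeasurableSet[mΩ] (F ⁻¹' u) := hF hu
    have hJm : Measurable[mΩ] J := measurable_const.indicator hFu
    have hJnn : ∀ ω, 0 ≤ J ω := fun ω => Set.indicator_nonneg (fun _ _ => zero_le_one) ω
    have hJle : ∀ ω, J ω ≤ 1 := by
      intro ω; by_cases h : ω ∈ F ⁻¹' u <;> simp [J, Set.indicator_apply, h]
    have hJint : Integrable J P := integrable_of_bdd' (P := P) (hJm.aestronglyMeasurable (μ := P))
      (Filter.Eventually.of_forall fun ω => by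
        rw [Real.norm_eq_abs, abs_of_nonneg (hJnn ω)]; exact hJle ω)
    have hprod : ∀ ω, I ω * J ω
        = (F ⁻¹' u ∩ A ⁻¹' {a}).indicator (fun _ => (1:ℝ)) ω := by
      intro ω
      by_cases h1 : A ω = a <;> by_cases h2 : F ω ∈ u <;>
        simp [I, J, Set.indicator_apply, h1, h2]
    have hIndep := (condIndepFun_iff_condExp_inter_preimage_eq_mul
      (μ := P) (hm' := hmXle) hF hA).mp hind u {a} hu (measurableSet_singleton a)
    have hIntInter : Integrable ((F ⁻¹' u ∩ A ⁻¹' {a}).indicator (fun _ => (1:ℝ))) P := by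
      refine integrable_of_bdd' (P := P) (C := 1)
        ((measurable_const.indicator (hFu.inter hAa)).aestronglyMeasurable (μ := P))
        (Filter.Eventually.of_forall fun ω => ?_)
      by_cases h : ω ∈ F ⁻¹' u ∩ A ⁻¹' {a} <;> simp [Set.indicator_apply, h]
    have hhJint : Integrable (fun ω => (P[I|mX]) ω * J ω) P :=
      hJint.bdd_mul hhm' hhb
    calc ∫ ω in s, I ω * J ω ∂P
        = ∫ ω in s, (F ⁻¹' u ∩ A ⁻¹' {a}).indicator (fun _ => (1:ℝ)) ω ∂P := by
          simp_rw [hprod]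
      _ = ∫ ω in s, (P[(F ⁻¹' u ∩ A ⁻¹' {a}).indicator (fun _ => (1:ℝ))|mX]) ω ∂P :=
          (setIntegral_condExp hmXle hIntInter hs).symm
      _ = ∫ ω in s, (P[J|mX]) ω * (P[I|mX]) ω ∂P := by
          refine integral_congr_ae (ae_restrict_of_ae ?_)
          filter_upwards [hIndep] with ω hω
          exact hω
      _ = ∫ ω in s, (P[fun ω' => (P[I|mX]) ω' * J ω'|mX]) ω ∂P := by
          refine integral_congr_ae (ae_restrict_of_ae ?_)
          have h2 := condExp_stronglyMeasurable_mul_of_bound hmXle hhm hJint 1 hhb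
          filter_upwards [h2] with ω hω
          have h3 : (P[fun ω' => (P[I|mX]) ω' * J ω'|mX]) ω = (P[I|mX]) ω * (P[J|mX]) ω := hω
          rw [h3]; ring
      _ = ∫ ω in s, (P[I|mX]) ω * J ω ∂P := setIntegral_condExp hmXle hhJint hs
  -- simple function version
  have hsimple : ∀ s : Set Ω, MeasurableSet[mX] s → ∀ ψ : SimpleFunc ℝ ℝ,
      ∫ ω in s, I ω * ψ (F ω) ∂P = ∫ ω in s, (P[I|mX]) ω * ψ (F ω) ∂P := by
    intro s hs ψ
    induction ψ using SimpleFunc.induction with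
    | const c hu =>
      rename_i u
      have hv : ∀ ω, (SimpleFunc.piecewise u hu (SimpleFunc.const ℝ c)
          (SimpleFunc.const ℝ 0)) (F ω) = c * (F ⁻¹' u).indicator (fun _ => (1:ℝ)) ω := by
        intro ω
        by_cases h : F ω ∈ u <;>
          simp [SimpleFunc.piecewise_apply, Set.indicator_apply, h]
      simp only [hv]
      simp_rw [show ∀ x y : ℝ, x * (c * y) = c * (x * y) from fun x y => by ring]
      rw [integral_const_mul, integral_const_mul, hset u hu s hs]
    | add hdis h1 h2 =>
      rename_i ψ1 ψ2
      obtain ⟨B1, hB1⟩ := ψ1.exists_forall_norm_le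
      obtain ⟨B2, hB2⟩ := ψ2.exists_forall_norm_le
      have hIn : ∀ ω, ‖I ω‖ ≤ 1 := fun ω => by
        rw [Real.norm_eq_abs, abs_of_nonneg (hInn ω)]; exact hIle ω
      have m1 : AEStronglyMeasurable[mΩ] (fun ω => ψ1 (F ω)) P :=
        ((ψ1.measurable.comp hF).aestronglyMeasurable (μ := P))
      have m2 : AEStronglyMeasurable[mΩ] (fun ω => ψ2 (F ω)) P :=
        ((ψ2.measurable.comp hF).aestronglyMeasurable (μ := P))
      have i1 : Integrable (fun ω => ψ1 (F ω)) P :=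
        integrable_of_bdd' (P := P) m1 (Filter.Eventually.of_forall fun ω => hB1 (F ω))
      have i2 : Integrable (fun ω => ψ2 (F ω)) P :=
        integrable_of_bdd' (P := P) m2 (Filter.Eventually.of_forall fun ω => hB2 (F ω))
      have a1 : Integrable (fun ω => I ω * ψ1 (F ω)) P :=
        i1.bdd_mul (hIm.aestronglyMeasurable (μ := P)) (Filter.Eventually.of_forall hIn)
      have a2 : Integrable (fun ω => I ω * ψ2 (F ω)) P :=
        i2.bdd_mul (hIm.aestronglyMeasurable (μ := P)) (Filter.Eventually.of_forall hIn)
      have b1 : Integrable (fun ω => (P[I|mX]) ω * ψ1 (F ω)) P := i1.bdd_mul hhm' hhb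
      have b2 : Integrable (fun ω => (P[I|mX]) ω * ψ2 (F ω)) P := i2.bdd_mul hhm' hhb
      simp only [SimpleFunc.coe_add, Pi.add_apply, mul_add]
      rw [integral_add a1.restrict a2.restrict,
        integral_add b1.restrict b2.restrict, h1, h2]
  -- main integral identity
  have hIF : Integrable (fun ω => I ω * F ω) P := by
    refine hFint.bdd_mul (c := 1) (hIm.aestronglyMeasurable (μ := P))
      (Filter.Eventually.of_forall fun ω => ?_)
    rw [Real.norm_eq_abs, abs_of_nonneg (hInn ω)]; exact hIle ω
  have hhF : Integrable (fun ω => (P[I|mX]) ω * F ω) P := hFint.bdd_mul hhm' hhb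
  have hmain : ∀ s : Set Ω, MeasurableSet[mX] s →
      ∫ ω in s, (P[I|mX]) ω * (P[F|mX]) ω ∂P = ∫ ω in s, I ω * F ω ∂P := by
    intro s hs
    set ψ : ℕ → SimpleFunc ℝ ℝ := fun n =>
      SimpleFunc.approxOn id measurable_id Set.univ 0 (Set.mem_univ 0) n with hψdef
    have hψb : ∀ n y, ‖ψ n y‖ ≤ 2 * ‖y‖ := by
      intro n y
      have h1 : dist (ψ n y) y ≤ dist (0:ℝ) y := by
        have h0 := SimpleFunc.edist_approxOn_le measurable_id (Set.mem_univ (0:ℝ)) y n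
        rw [edist_dist, edist_dist] at h0
        exact (ENNReal.ofReal_le_ofReal_iff dist_nonneg).mp h0
      rw [dist_zero_left] at h1
      calc ‖ψ n y‖ ≤ ‖ψ n y - y‖ + ‖y‖ := by
            simpa using norm_add_le (ψ n y - y) y
        _ ≤ ‖y‖ + ‖y‖ := by gcongr; rw [← dist_eq_norm]; exact h1
        _ = 2 * ‖y‖ := by ring
    have hψt : ∀ y : ℝ, Filter.Tendsto (fun n => ψ n y) Filter.atTop (nhds y) := fun y =>
      SimpleFunc.tendsto_approxOn measurable_id (Set.mem_univ 0) (by simp)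
    have hFn : ∀ ω, ‖F ω‖ ≤ C := fun ω => by rw [Real.norm_eq_abs]; exact hFb ω
    have hT1 : Filter.Tendsto (fun n => ∫ ω in s, I ω * ψ n (F ω) ∂P) Filter.atTop
        (nhds (∫ ω in s, I ω * F ω ∂P)) := by
      refine tendsto_integral_of_dominated_convergence (fun _ => 2 * C) ?_ ?_ ?_ ?_
      · intro n
        exact ((hIm.mul ((ψ n).measurable.comp hF)).aestronglyMeasurable
          (μ := P.restrict s))
      · exact integrable_const _
      · intro n
        refine Filter.Eventually.of_forall fun ω => ?_
        rw [norm_mul]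
        calc ‖I ω‖ * ‖ψ n (F ω)‖ ≤ 1 * (2 * ‖F ω‖) := by
              refine mul_le_mul ?_ (hψb n (F ω)) (norm_nonneg _) zero_le_one
              rw [Real.norm_eq_abs, abs_of_nonneg (hInn ω)]; exact hIle ω
          _ ≤ 2 * C := by
              have := hFn ω
              nlinarith [norm_nonneg (F ω)]
      · exact Filter.Eventually.of_forall fun ω => (hψt (F ω)).const_mul (I ω)
    have hT2 : Filter.Tendsto (fun n => ∫ ω in s, (P[I|mX]) ω * ψ n (F ω) ∂P) Filter.atTop
        (nhds (∫ ω in s, (P[I|mX]) ω * F ω ∂P)) := by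
      refine tendsto_integral_of_dominated_convergence (fun _ => 2 * C) ?_ ?_ ?_ ?_
      · intro n
        exact hhm'.restrict.mul (((ψ n).measurable.comp hF).aestronglyMeasurable
          (μ := P.restrict s))
      · exact integrable_const _
      · intro n
        refine Filter.Eventually.mono (ae_restrict_of_ae hhb) fun ω hω => ?_
        rw [norm_mul]
        calc ‖(P[I|mX]) ω‖ * ‖ψ n (F ω)‖ ≤ 1 * (2 * ‖F ω‖) :=
              mul_le_mul hω (hψb n (F ω)) (norm_nonneg _) zero_le_one
          _ ≤ 2 * C := by
              have := hFn ω
              nlinarith [norm_nonneg (F ω)]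
      · exact Filter.Eventually.of_forall fun ω => (hψt (F ω)).const_mul ((P[I|mX]) ω)
    have hT1' : Filter.Tendsto (fun n => ∫ ω in s, (P[I|mX]) ω * ψ n (F ω) ∂P) Filter.atTop
        (nhds (∫ ω in s, I ω * F ω ∂P)) :=
      hT1.congr fun n => hsimple s hs (ψ n)
    have hIhF : ∫ ω in s, (P[I|mX]) ω * F ω ∂P = ∫ ω in s, I ω * F ω ∂P :=
      tendsto_nhds_unique hT2 hT1'
    calc ∫ ω in s, (P[I|mX]) ω * (P[F|mX]) ω ∂P
        = ∫ ω in s, (P[fun ω' => (P[I|mX]) ω' * F ω'|mX]) ω ∂P := by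
          refine integral_congr_ae (ae_restrict_of_ae ?_)
          have h2 := condExp_stronglyMeasurable_mul_of_bound hmXle hhm hFint 1 hhb
          filter_upwards [h2] with ω hω
          have h3 : (P[fun ω' => (P[I|mX]) ω' * F ω'|mX]) ω
              = (P[I|mX]) ω * (P[F|mX]) ω := hω
          rw [h3]
      _ = ∫ ω in s, (P[I|mX]) ω * F ω ∂P := setIntegral_condExp hmXle hhF hs
      _ = ∫ ω in s, I ω * F ω ∂P := hIhF
  -- conclude via uniqueness of conditional expectation
  haveI : SigmaFinite (P.trim hmXle) := by
    have : IsFiniteMeasure (P.trim hmXle) := isFiniteMeasure_trim hmXle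
    infer_instance
  have hcF : Integrable (P[F|mX]) P := integrable_condExp
  refine (ae_eq_condExp_of_forall_setIntegral_eq hmXle hIF
    (fun s hs _ => (hcF.bdd_mul hhm' hhb).restrict)
    (fun s hs _ => hmain s hs) ?_).symm
  exact ((stronglyMeasurable_condExp.mul stronglyMeasurable_condExp).aestronglyMeasurable)

/-- (Causal identification of the CATE.) Suppose `Ω` is a standard Borel
probability space carrying bounded measurable potential outcomes `Y⁰, Y¹` such that
(consistency) `Y = 𝟙{A=1} Y¹ + 𝟙{A=0} Y⁰` a.s.; (positivity) `δ ≤ g(a,X) ≤ 1 − δ` a.s.;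
and (no unmeasured confounders) for each `a`, `Yᵃ ⫫ A | σ(X)`. Then for each `a ∈ {0,1}`,
`E_P[Yᵃ | σ(X)] = Q̄^{(a)}(X)` `P`-a.s.; consequently
`E_P[Y¹ | σ(X)] − E_P[Y⁰ | σ(X)] = Ψ(X)` `P`-a.s. -/
theorem stmt_5
    {Ω 𝒳 : Type*} (mX : MeasurableSpace Ω) [mΩ : MeasurableSpace Ω] [StandardBorelSpace Ω] [MeasurableSpace 𝒳]
    (P : Measure Ω) [IsProbabilityMeasure P]
    (X : Ω → 𝒳) (hX : Measurable X)
    (A : Ω → Bool) (hA : Measurable A)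
    (Y : Ω → ℝ) (hYm : Measurable Y) (hYb : ∃ C, ∀ ω, |Y ω| ≤ C)
    (hmX : mX = MeasurableSpace.comap X inferInstance)
    (hmXle : mX ≤ mΩ)
    (g : Bool → Ω → ℝ) (hgm : ∀ a, Measurable[mX] (g a))
    (hgv : ∀ a, g a =ᵐ[P] P[fun ω => if A ω = a then (1:ℝ) else 0|mX])
    (δ : ℝ) (hδ : 0 < δ) (hgb : ∀ a, ∀ᵐ ω ∂P, δ ≤ g a ω ∧ g a ω ≤ 1 - δ)
    (Qbar : Bool → Ω → ℝ)
    (hQbar : ∀ a ω, Qbar a ω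
      = (P[fun ω' => (if A ω' = a then (1:ℝ) else 0) * Y ω'|mX]) ω / g a ω)
    (Ypo : Bool → Ω → ℝ) (hYpom : ∀ a, Measurable (Ypo a))
    (hYpob : ∃ C, ∀ a ω, |Ypo a ω| ≤ C)
    (hconsistency : ∀ᵐ ω ∂P,
      Y ω = (if A ω = true then (1:ℝ) else 0) * Ypo true ω
        + (if A ω = false then (1:ℝ) else 0) * Ypo false ω)
    (hnuc : ∀ a, CondIndepFun mX hmXle (Ypo a) A (μ := P)) :
    (∀ a, P[Ypo a|mX] =ᵐ[P] Qbar a) ∧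
    (fun ω => (P[Ypo true|mX]) ω - (P[Ypo false|mX]) ω)
      =ᵐ[P] fun ω => Qbar true ω - Qbar false ω := by
  obtain ⟨Cp, hCp⟩ := hYpob
  have hmaj : ∀ a : Bool, P[Ypo a|mX] =ᵐ[P] Qbar a := by
    intro a
    have hindY : (fun ω' => (if A ω' = a then (1:ℝ) else 0) * Y ω')
        = fun ω' => (A ⁻¹' {a}).indicator (fun _ => (1:ℝ)) ω' * Y ω' := by
      funext ω'; by_cases h : A ω' = a <;> simp [Set.indicator_apply, h]
    have hindf : (fun ω => if A ω = a then (1:ℝ) else 0)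
        = (A ⁻¹' {a}).indicator (fun _ => (1:ℝ)) := by
      funext ω; by_cases h : A ω = a <;> simp [Set.indicator_apply, h]
    have hkey := condexp_indicator_mul_of_condIndepFun hmXle hA a (hYpom a)
      (fun ω => hCp a ω) (hnuc a)
    have hcons : (fun ω => (A ⁻¹' {a}).indicator (fun _ => (1:ℝ)) ω * Y ω)
        =ᵐ[P] fun ω => (A ⁻¹' {a}).indicator (fun _ => (1:ℝ)) ω * Ypo a ω := by
      filter_upwards [hconsistency] with ω hω
      by_cases h : A ω = a
      · have hY : Y ω = Ypo a ω := by
          cases a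
          · simpa [h] using hω
          · simpa [h] using hω
        simp [Set.indicator_apply, h, hY]
      · simp [Set.indicator_apply, h]
    have hgeq : g a =ᵐ[P] P[(A ⁻¹' {a}).indicator (fun _ => (1:ℝ))|mX] := by
      have h' := hgv a
      rwa [hindf] at h'
    have hchain : P[fun ω' => (if A ω' = a then (1:ℝ) else 0) * Y ω'|mX]
        =ᵐ[P] fun ω => g a ω * (P[Ypo a|mX]) ω := by
      rw [hindY]
      refine (condExp_congr_ae hcons).trans (hkey.trans ?_)
      filter_upwards [hgeq] with ω hg'
      rw [hg']
    refine Filter.EventuallyEq.symm ?_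
    filter_upwards [hchain, hgb a] with ω h1 hδω
    have hne : g a ω ≠ 0 := ne_of_gt (lt_of_lt_of_le hδ hδω.1)
    rw [hQbar a ω, h1, mul_div_cancel_left₀ _ hne]
  refine ⟨hmaj, ?_⟩
  filter_upwards [hmaj true, hmaj false] with ω h1 h2
  rw [h1, h2]
end

section
/- (Variance of the efficient influence function.) The second-moment matrix of D* satisfies E_P[D*(O) D*(O)^⊤] = G⁻¹ E_P[ ( σ²(A,X)/g(A,X)² + (Ψ(X) − β₀^⊤ v(X))² ) v(X) v(X)^⊤ ] G⁻¹, where g(A,X) := 𝟙{A=1} g(1,X) + 𝟙{A=0} g(0,X). -/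
open MeasureTheory Matrix

/-!
Tested against bounded `σ(X)`-measurable functions, the AIPW residual `Δ*` has mean zero and
second moment `σ²(A,X)/g(A,X)²`: arm by arm, both facts reduce to the defining identities of
`g`, `Q̄`, `σ²` through `E[F Z] = E[F E[Z | X]]`. Hence in `E[(Δ* + r)² v vᵀ]`, with
`r = Ψ - β₀ᵀ v`, the cross term vanishes and `Δ*²` may be replaced by `σ²(A,X)/g(A,X)²`.
The theorem follows from `D* = G⁻¹ (Δ* + r) v` and the symmetry of `G⁻¹`.
-/

namespace MeasureTheory

variable {Ω : Type*} {m₀ : MeasurableSpace Ω} {μ : Measure[m₀] Ω}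

theorem integral_mul_eq_of_condExp_ae_eq {m : MeasurableSpace Ω} [IsFiniteMeasure μ]
    (hm : m ≤ m₀) {F Z c : Ω → ℝ} (hFm : Measurable[m] F) (hF : MemLp F ⊤ μ)
    (hZ : Integrable Z μ) (hc : μ[Z|m] =ᵐ[μ] c) :
    ∫ ω, F ω * Z ω ∂μ = ∫ ω, F ω * c ω ∂μ :=
  calc ∫ ω, F ω * Z ω ∂μ = ∫ ω, μ[F * Z|m] ω ∂μ := (integral_condExp hm).symm
    _ = ∫ ω, F ω * c ω ∂μ := by
        refine integral_congr_ae ?_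
        filter_upwards [condExp_mul_of_stronglyMeasurable_left hFm.stronglyMeasurable
          (hZ.mul_of_top_right hF) hZ, hc] with ω hFZ hZc
        rw [hFZ, Pi.mul_apply, hZc]

theorem MemLp.mul_top {f g : Ω → ℝ} (hf : MemLp f ⊤ μ) (hg : MemLp g ⊤ μ) :
    MemLp (fun ω => f ω * g ω) ⊤ μ :=
  hg.mul' hf

theorem MemLp.div_of_le {f g : Ω → ℝ} {δ : ℝ} (hf : MemLp f ⊤ μ) (hg : AEStronglyMeasurable g μ)
    (hδ : 0 < δ) (hδg : ∀ᵐ ω ∂μ, δ ≤ g ω) : MemLp (fun ω => f ω / g ω) ⊤ μ := by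
  have hinv : MemLp (fun ω => (g ω)⁻¹) ⊤ μ := by
    refine memLp_top_of_bound hg.aemeasurable.inv.aestronglyMeasurable δ⁻¹ ?_
    filter_upwards [hδg] with ω hω
    rw [norm_inv, Real.norm_of_nonneg (hδ.le.trans hω)]
    exact inv_anti₀ hδ hω
  simpa only [div_eq_mul_inv] using hf.mul_top hinv

theorem memLp_top_dotProduct {ι : Type*} [Fintype ι] (β : ι → ℝ) {V : Ω → ι → ℝ}
    (hV : ∀ i, MemLp (fun ω => V ω i) ⊤ μ) : MemLp (fun ω => β ⬝ᵥ V ω) ⊤ μ := by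
  simp only [dotProduct]
  exact memLp_finsetSum _ fun i _ => (memLp_top_const (β i)).mul_top (hV i)

theorem select_eq_sum_ite {α : Type*} [Fintype α] [DecidableEq α] (A : Ω → α)
    (ψ : α → Ω → ℝ) :
    (fun ω => ψ (A ω) ω) = fun ω => ∑ a, (if A ω = a then 1 else 0) * ψ a ω :=
  funext fun ω => by simp

variable {α : Type*} [MeasurableSpace α] [MeasurableSingletonClass α] [DecidableEq α]

theorem memLp_top_ite_eq {A : Ω → α} (hA : Measurable A) (a : α) :
    MemLp (fun ω => if A ω = a then (1 : ℝ) else 0) ⊤ μ := by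
  refine memLp_top_of_bound ?_ 1 (ae_of_all _ fun ω => ?_)
  · exact (measurable_const.ite (hA (measurableSet_singleton a)) measurable_const)
      |>.aestronglyMeasurable
  · split_ifs <;> simp

theorem memLp_top_select [Fintype α] {A : Ω → α} (hA : Measurable A) {ψ : α → Ω → ℝ}
    (hψ : ∀ a, MemLp (ψ a) ⊤ μ) : MemLp (fun ω => ψ (A ω) ω) ⊤ μ := by
  rw [select_eq_sum_ite]
  exact memLp_finsetSum _ fun a _ => (memLp_top_ite_eq hA a).mul_top (hψ a)

theorem integral_select_eq_sum [Fintype α] {A : Ω → α} (hA : Measurable A) {ψ : α → Ω → ℝ}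
    (hψ : ∀ a, Integrable (ψ a) μ) :
    ∫ ω, ψ (A ω) ω ∂μ = ∑ a, ∫ ω, (if A ω = a then 1 else 0) * ψ a ω ∂μ := by
  rw [select_eq_sum_ite]
  exact integral_finsetSum _ fun a _ => (hψ a).mul_of_top_right (memLp_top_ite_eq hA a)

noncomputable def secondMoment {ι : Type*} (μ : Measure[m₀] Ω) (U : Ω → ι → ℝ) : Matrix ι ι ℝ :=
  of fun k l => ∫ ω, U ω k * U ω l ∂μ

theorem isSymm_secondMoment {ι : Type*} (U : Ω → ι → ℝ) : (secondMoment μ U).IsSymm :=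
  IsSymm.ext fun k l => by simp only [secondMoment, of_apply, mul_comm]

theorem secondMoment_mulVec {ι κ : Type*} [Fintype ι] (B : Matrix κ ι ℝ) {U : Ω → ι → ℝ}
    (hU : ∀ k, MemLp (fun ω => U ω k) 2 μ) :
    secondMoment μ (fun ω => B *ᵥ U ω) = B * secondMoment μ U * Bᵀ := by
  ext i j
  have hUU k l : Integrable (fun ω => U ω k * U ω l) μ := (hU k).integrable_mul (hU l)
  have hexpand ω : (B *ᵥ U ω) i * (B *ᵥ U ω) j = ∑ k, ∑ l, B i k * B j l * (U ω k * U ω l) := by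
    simp only [mulVec, dotProduct, Finset.sum_mul_sum]
    exact Finset.sum_congr rfl fun k _ => Finset.sum_congr rfl fun l _ => by ring
  simp only [secondMoment, of_apply, hexpand, mul_apply, transpose_apply, Finset.sum_mul]
  rw [integral_finsetSum _ fun k _ => integrable_finsetSum _ fun l _ => (hUU k l).const_mul _,
    Finset.sum_comm]
  refine Finset.sum_congr rfl fun k _ => ?_
  rw [integral_finsetSum _ fun l _ => (hUU k l).const_mul _]
  refine Finset.sum_congr rfl fun l _ => ?_
  rw [integral_const_mul]
  ring

end MeasureTheory

section Nuisance

variable {Ω α : Type*} [MeasurableSpace α] [DecidableEq α]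

/-- `g`, `Q`, `σ2` are the propensity score, outcome regression and conditional variance of
`(A, Y)` given `m`, with the defining identities multiplied through by `g a`. -/
structure IsNuisance {m₀ : MeasurableSpace Ω} (P : Measure[m₀] Ω) (m : MeasurableSpace Ω)
    (A : Ω → α) (Y : Ω → ℝ) (g Q σ2 : α → Ω → ℝ) : Prop where
  le : m ≤ m₀
  measurable_A : Measurable[m₀] A
  memLp_Y : MemLp Y ⊤ P
  measurable_g : ∀ a, Measurable[m] (g a)
  overlap : ∃ δ, 0 < δ ∧ ∀ a, ∀ᵐ ω ∂P, δ ≤ g a ω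
  measurable_Q : ∀ a, Measurable[m] (Q a)
  memLp_Q : ∀ a, MemLp (Q a) ⊤ P
  measurable_σ2 : ∀ a, Measurable[m] (σ2 a)
  memLp_σ2 : ∀ a, MemLp (σ2 a) ⊤ P
  condExp_ite : ∀ a, P[fun ω => if A ω = a then 1 else 0|m] =ᵐ[P] g a
  condExp_ite_mul : ∀ a,
    P[fun ω => (if A ω = a then 1 else 0) * Y ω|m] =ᵐ[P] fun ω => Q a ω * g a ω
  condExp_ite_mul_sq : ∀ a,
    P[fun ω => (if A ω = a then 1 else 0) * (Y ω - Q a ω) ^ 2|m] =ᵐ[P] fun ω => σ2 a ω * g a ω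

namespace IsNuisance

variable {m m₀ : MeasurableSpace Ω} {P : Measure[m₀] Ω} {A : Ω → α} {Y : Ω → ℝ}
  {g Q σ2 : α → Ω → ℝ}

theorem memLp_div (h : IsNuisance P m A Y g Q σ2) {F : Ω → ℝ} (hF : MemLp F ⊤ P) (a : α) :
    MemLp (fun ω => F ω / g a ω) ⊤ P := by
  obtain ⟨δ, hδ, hgδ⟩ := h.overlap
  exact hF.div_of_le ((h.measurable_g a).mono h.le le_rfl).aestronglyMeasurable hδ (hgδ a)

variable [MeasurableSingletonClass α]

theorem of_div (hm : m ≤ m₀) (hA : Measurable A) (hYm : Measurable Y)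
    (hYb : ∃ C, ∀ ω, |Y ω| ≤ C) (hgm : ∀ a, Measurable[m] (g a))
    (hgv : ∀ a, g a =ᵐ[P] P[fun ω => if A ω = a then (1:ℝ) else 0|m])
    {δ : ℝ} (hδ : 0 < δ) (hgδ : ∀ a, ∀ᵐ ω ∂P, δ ≤ g a ω)
    (hQ : ∀ a ω, Q a ω = P[fun ω' => (if A ω' = a then (1:ℝ) else 0) * Y ω'|m] ω / g a ω)
    (hσ2 : ∀ a ω, σ2 a ω
      = P[fun ω' => (if A ω' = a then (1:ℝ) else 0) * (Y ω' - Q a ω') ^ 2|m] ω / g a ω) :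
    IsNuisance P m A Y g Q σ2 := by
  have hY : MemLp Y ⊤ P := by
    obtain ⟨C, hC⟩ := hYb
    exact memLp_top_of_bound hYm.aestronglyMeasurable C (ae_of_all _ hC)
  have hquot a {Z F : Ω → ℝ} (hZ : MemLp Z ⊤ P) (hF : ∀ ω, F ω = P[Z|m] ω / g a ω) :
      Measurable[m] F ∧ MemLp F ⊤ P ∧ P[Z|m] =ᵐ[P] fun ω => F ω * g a ω := by
    rw [funext hF]
    refine ⟨stronglyMeasurable_condExp.measurable.div (hgm a),
      (hZ.condExp le_top).div_of_le ((hgm a).mono hm le_rfl).aestronglyMeasurable hδ (hgδ a), ?_⟩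
    filter_upwards [hgδ a] with ω hω
    rw [div_mul_cancel₀ _ (hδ.trans_le hω).ne']
  have hI a := memLp_top_ite_eq (μ := P) hA a
  have hQ' a := hquot a ((hI a).mul_top hY) (hQ a)
  have hres a : MemLp (fun ω => Y ω - Q a ω) ⊤ P := hY.sub (hQ' a).2.1
  have hσ2' a :=
    hquot a ((hI a).mul_top (by simpa only [sq] using (hres a).mul_top (hres a))) (hσ2 a)
  exact ⟨hm, hA, hY, hgm, ⟨δ, hδ, hgδ⟩, fun a => (hQ' a).1, fun a => (hQ' a).2.1,
    fun a => (hσ2' a).1, fun a => (hσ2' a).2.1, fun a => (hgv a).symm, fun a => (hQ' a).2.2,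
    fun a => (hσ2' a).2.2⟩

variable [IsFiniteMeasure P]

theorem integral_mul_ite_mul_sub_eq_zero (h : IsNuisance P m A Y g Q σ2) {F : Ω → ℝ}
    (hFm : Measurable[m] F) (hF : MemLp F ⊤ P) (a : α) :
    ∫ ω, F ω * ((if A ω = a then 1 else 0) * (Y ω - Q a ω)) ∂P = 0 := by
  have hI := memLp_top_ite_eq (μ := P) h.measurable_A a
  have hFQm : Measurable[m] fun ω => F ω * Q a ω := hFm.mul (h.measurable_Q a)
  have hFQ : MemLp (fun ω => F ω * Q a ω) ⊤ P := hF.mul_top (h.memLp_Q a)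
  calc ∫ ω, F ω * ((if A ω = a then 1 else 0) * (Y ω - Q a ω)) ∂P
      = ∫ ω, F ω * ((if A ω = a then 1 else 0) * Y ω) ∂P
        - ∫ ω, (F ω * Q a ω) * (if A ω = a then 1 else 0) ∂P := by
        rw [← integral_sub]
        · congr with ω
          ring
        · exact (hF.mul_top (hI.mul_top h.memLp_Y)).integrable le_top
        · exact (hFQ.mul_top hI).integrable le_top
    _ = ∫ ω, F ω * (Q a ω * g a ω) ∂P - ∫ ω, (F ω * Q a ω) * g a ω ∂P := by
        rw [integral_mul_eq_of_condExp_ae_eq h.le hFm hF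
            ((hI.mul_top h.memLp_Y).integrable le_top) (h.condExp_ite_mul a),
          integral_mul_eq_of_condExp_ae_eq h.le hFQm hFQ (hI.integrable le_top) (h.condExp_ite a)]
    _ = 0 := by simp only [mul_assoc, sub_self]

theorem integral_mul_ite_mul_sq_sub (h : IsNuisance P m A Y g Q σ2) {F : Ω → ℝ}
    (hFm : Measurable[m] F) (hF : MemLp F ⊤ P) (a : α) :
    ∫ ω, F ω * ((if A ω = a then 1 else 0) * (Y ω - Q a ω) ^ 2) ∂P
      = ∫ ω, (F ω * σ2 a ω) * (if A ω = a then 1 else 0) ∂P := by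
  have hI := memLp_top_ite_eq (μ := P) h.measurable_A a
  have hres : MemLp (fun ω => Y ω - Q a ω) ⊤ P := h.memLp_Y.sub (h.memLp_Q a)
  have hZ : Integrable (fun ω => (if A ω = a then 1 else 0) * (Y ω - Q a ω) ^ 2) P := by
    simpa only [sq] using (hI.mul_top (hres.mul_top hres)).integrable le_top
  calc ∫ ω, F ω * ((if A ω = a then 1 else 0) * (Y ω - Q a ω) ^ 2) ∂P
      = ∫ ω, F ω * (σ2 a ω * g a ω) ∂P :=
        integral_mul_eq_of_condExp_ae_eq h.le hFm hF hZ (h.condExp_ite_mul_sq a)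
    _ = ∫ ω, (F ω * σ2 a ω) * g a ω ∂P := by simp only [mul_assoc]
    _ = ∫ ω, (F ω * σ2 a ω) * (if A ω = a then 1 else 0) ∂P :=
        (integral_mul_eq_of_condExp_ae_eq h.le (hFm.mul (h.measurable_σ2 a))
          (hF.mul_top (h.memLp_σ2 a)) (hI.integrable le_top) (h.condExp_ite a)).symm

variable [Fintype α]

theorem integral_select_mul_sub_eq_zero (h : IsNuisance P m A Y g Q σ2) {φ : α → Ω → ℝ}
    (hφm : ∀ a, Measurable[m] (φ a)) (hφ : ∀ a, MemLp (φ a) ⊤ P) :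
    ∫ ω, φ (A ω) ω * (Y ω - Q (A ω) ω) ∂P = 0 := by
  refine (integral_select_eq_sum h.measurable_A (ψ := fun a ω => φ a ω * (Y ω - Q a ω))
    fun a => ((hφ a).mul_top (h.memLp_Y.sub (h.memLp_Q a))).integrable le_top).trans ?_
  refine Finset.sum_eq_zero fun a _ => ?_
  refine Eq.trans ?_ (h.integral_mul_ite_mul_sub_eq_zero (hφm a) (hφ a) a)
  congr with ω
  ring

theorem integral_select_mul_sq_sub (h : IsNuisance P m A Y g Q σ2) {φ : α → Ω → ℝ}
    (hφm : ∀ a, Measurable[m] (φ a)) (hφ : ∀ a, MemLp (φ a) ⊤ P) :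
    ∫ ω, φ (A ω) ω * (Y ω - Q (A ω) ω) ^ 2 ∂P = ∫ ω, φ (A ω) ω * σ2 (A ω) ω ∂P := by
  have hres a : MemLp (fun ω => Y ω - Q a ω) ⊤ P := h.memLp_Y.sub (h.memLp_Q a)
  rw [integral_select_eq_sum h.measurable_A (ψ := fun a ω => φ a ω * (Y ω - Q a ω) ^ 2)
      fun a => by
        simpa only [sq] using ((hφ a).mul_top ((hres a).mul_top (hres a))).integrable le_top,
    integral_select_eq_sum h.measurable_A (ψ := fun a ω => φ a ω * σ2 a ω)
      fun a => ((hφ a).mul_top (h.memLp_σ2 a)).integrable le_top]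
  refine Finset.sum_congr rfl fun a _ => ?_
  calc ∫ ω, (if A ω = a then 1 else 0) * (φ a ω * (Y ω - Q a ω) ^ 2) ∂P
      = ∫ ω, φ a ω * ((if A ω = a then 1 else 0) * (Y ω - Q a ω) ^ 2) ∂P := by
        congr with ω
        ring
    _ = ∫ ω, (if A ω = a then 1 else 0) * (φ a ω * σ2 a ω) ∂P := by
        rw [h.integral_mul_ite_mul_sq_sub (hφm a) (hφ a) a]
        congr with ω
        ring

end IsNuisance

end Nuisance

section Aipw

variable {Ω : Type*}

theorem ite_mul_add_ite_mul_eq {β : Type*} (b : Bool) (x : Bool → β → ℝ) (y : β) :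
    (if b = true then 1 else 0) * x true y + (if b = false then 1 else 0) * x false y = x b y := by
  cases b <;> simp

noncomputable def aipwResidual (A : Ω → Bool) (Y : Ω → ℝ) (g Q : Bool → Ω → ℝ) (ω : Ω) : ℝ :=
  (if A ω = true then 1 else -1) / g (A ω) ω * (Y ω - Q (A ω) ω)

theorem aipwResidual_eq (A : Ω → Bool) (Y : Ω → ℝ) (g Q : Bool → Ω → ℝ) (ω : Ω) :
    aipwResidual A Y g Q ω
      = ((if A ω = true then 1 else 0) / g true ω - (if A ω = false then 1 else 0) / g false ω)
        * (Y ω - ((if A ω = true then 1 else 0) * Q true ω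
          + (if A ω = false then 1 else 0) * Q false ω)) := by
  unfold aipwResidual
  cases A ω <;> simp [neg_div]

namespace IsNuisance

variable {m m₀ : MeasurableSpace Ω} {P : Measure[m₀] Ω} {A : Ω → Bool} {Y : Ω → ℝ}
  {g Q σ2 : Bool → Ω → ℝ}

theorem memLp_aipwResidual (h : IsNuisance P m A Y g Q σ2) :
    MemLp (aipwResidual A Y g Q) ⊤ P :=
  memLp_top_select h.measurable_A
    (ψ := fun a ω => (if a = true then 1 else -1) / g a ω * (Y ω - Q a ω)) fun a =>
    (h.memLp_div (memLp_top_const _) a).mul_top (h.memLp_Y.sub (h.memLp_Q a))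

variable [IsFiniteMeasure P]

theorem integral_aipwResidual_mul_eq_zero (h : IsNuisance P m A Y g Q σ2) {F : Ω → ℝ}
    (hFm : Measurable[m] F) (hF : MemLp F ⊤ P) :
    ∫ ω, aipwResidual A Y g Q ω * F ω ∂P = 0 := by
  refine Eq.trans ?_ (h.integral_select_mul_sub_eq_zero
    (φ := fun a ω => (if a = true then 1 else -1) / g a ω * F ω)
    (fun a => (measurable_const.div (h.measurable_g a)).mul hFm)
    fun a => (h.memLp_div (memLp_top_const _) a).mul_top hF)
  congr with ω
  unfold aipwResidual
  ring

theorem integral_aipwResidual_sq_mul (h : IsNuisance P m A Y g Q σ2) {F : Ω → ℝ}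
    (hFm : Measurable[m] F) (hF : MemLp F ⊤ P) :
    ∫ ω, aipwResidual A Y g Q ω ^ 2 * F ω ∂P = ∫ ω, σ2 (A ω) ω / g (A ω) ω ^ 2 * F ω ∂P := by
  calc ∫ ω, aipwResidual A Y g Q ω ^ 2 * F ω ∂P
      = ∫ ω, F ω / g (A ω) ω / g (A ω) ω * (Y ω - Q (A ω) ω) ^ 2 ∂P := by
        congr with ω
        unfold aipwResidual
        cases A ω <;> simp only [if_true, Bool.false_eq_true, if_false] <;> ring
    _ = ∫ ω, F ω / g (A ω) ω / g (A ω) ω * σ2 (A ω) ω ∂P :=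
        h.integral_select_mul_sq_sub (φ := fun a ω => F ω / g a ω / g a ω)
          (fun a => (hFm.div (h.measurable_g a)).div (h.measurable_g a))
          fun a => h.memLp_div (h.memLp_div hF a) a
    _ = ∫ ω, σ2 (A ω) ω / g (A ω) ω ^ 2 * F ω ∂P := by
        congr with ω
        ring

theorem integral_aipwResidual_add_sq_mul (h : IsNuisance P m A Y g Q σ2) {r w : Ω → ℝ}
    (hrm : Measurable[m] r) (hr : MemLp r ⊤ P) (hwm : Measurable[m] w) (hw : MemLp w ⊤ P) :
    ∫ ω, (aipwResidual A Y g Q ω + r ω) ^ 2 * w ω ∂P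
      = ∫ ω, (σ2 (A ω) ω / g (A ω) ω ^ 2 + r ω ^ 2) * w ω ∂P := by
  have hΔ := h.memLp_aipwResidual
  have hsq : Integrable (fun ω => aipwResidual A Y g Q ω ^ 2 * w ω) P := by
    simpa only [sq] using ((hΔ.mul_top hΔ).mul_top hw).integrable le_top
  have hlin : Integrable (fun ω => aipwResidual A Y g Q ω * (2 * r ω * w ω)) P :=
    (hΔ.mul_top (((memLp_top_const 2).mul_top hr).mul_top hw)).integrable le_top
  have hvar : Integrable (fun ω => σ2 (A ω) ω / g (A ω) ω ^ 2 * w ω) P := by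
    refine ((memLp_top_select h.measurable_A (ψ := fun a ω => σ2 a ω / g a ω / g a ω)
      fun a => h.memLp_div (h.memLp_div (h.memLp_σ2 a) a) a).mul_top hw).integrable le_top
      |>.congr (ae_of_all _ fun ω => ?_)
    simp only [div_div, sq]
  have hrw : Integrable (fun ω => r ω ^ 2 * w ω) P := by
    simpa only [sq] using ((hr.mul_top hr).mul_top hw).integrable le_top
  calc ∫ ω, (aipwResidual A Y g Q ω + r ω) ^ 2 * w ω ∂P
      = ∫ ω, (aipwResidual A Y g Q ω ^ 2 * w ω
          + aipwResidual A Y g Q ω * (2 * r ω * w ω) + r ω ^ 2 * w ω) ∂P := by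
        congr with ω
        ring
    _ = ∫ ω, σ2 (A ω) ω / g (A ω) ω ^ 2 * w ω ∂P + 0 + ∫ ω, r ω ^ 2 * w ω ∂P := by
        have hsum : Integrable (fun ω => aipwResidual A Y g Q ω ^ 2 * w ω
            + aipwResidual A Y g Q ω * (2 * r ω * w ω)) P := hsq.add hlin
        rw [integral_add hsum hrw, integral_add hsq hlin,
          h.integral_aipwResidual_sq_mul hwm hw,
          h.integral_aipwResidual_mul_eq_zero (F := fun ω => 2 * r ω * w ω)
            ((measurable_const.mul hrm).mul hwm)
            (((memLp_top_const 2).mul_top hr).mul_top hw)]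
    _ = ∫ ω, (σ2 (A ω) ω / g (A ω) ω ^ 2 + r ω ^ 2) * w ω ∂P := by
        rw [add_zero, ← integral_add hvar hrw]
        congr with ω
        ring

theorem secondMoment_aipwResidual_add_mul {ι : Type*} (h : IsNuisance P m A Y g Q σ2)
    {r : Ω → ℝ} (hrm : Measurable[m] r) (hr : MemLp r ⊤ P) {V : Ω → ι → ℝ}
    (hVm : Measurable[m] V) (hV : ∀ k, MemLp (fun ω => V ω k) ⊤ P) :
    secondMoment P (fun ω k => (aipwResidual A Y g Q ω + r ω) * V ω k)
      = of fun k l => ∫ ω, (σ2 (A ω) ω / g (A ω) ω ^ 2 + r ω ^ 2) * (V ω k * V ω l) ∂P := by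
  ext k l
  rw [secondMoment, of_apply, of_apply,
    ← h.integral_aipwResidual_add_sq_mul (w := fun ω => V ω k * V ω l) hrm hr
    (((measurable_pi_apply k).comp hVm).mul ((measurable_pi_apply l).comp hVm))
    ((hV k).mul_top (hV l))]
  congr with ω
  ring

end IsNuisance

end Aipw
/-- (Variance of the efficient influence function.) The second-moment
matrix of `D*` satisfies
`E_P[D* D*ᵀ] = G⁻¹ E_P[(σ²(A,X)/g(A,X)² + (Ψ(X) − β₀ᵀ v(X))²) v(X) v(X)ᵀ] G⁻¹`,
where `g(A,X) = 𝟙{A=1} g(1,X) + 𝟙{A=0} g(0,X)`. -/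
theorem stmt_11
    {Ω 𝒳 : Type*} [MeasurableSpace Ω] [MeasurableSpace 𝒳]
    (P : Measure Ω) [IsProbabilityMeasure P]
    (X : Ω → 𝒳) (hX : Measurable X)
    (A : Ω → Bool) (hA : Measurable A)
    (Y : Ω → ℝ) (hYm : Measurable Y) (hYb : ∃ C, ∀ ω, |Y ω| ≤ C)
    (mX : MeasurableSpace Ω) (hmX : mX = MeasurableSpace.comap X inferInstance)
    (g : Bool → Ω → ℝ) (hgm : ∀ a, Measurable[mX] (g a))
    (hgv : ∀ a, g a =ᵐ[P] P[fun ω => if A ω = a then (1:ℝ) else 0|mX])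
    (δ : ℝ) (hδ : 0 < δ) (hgb : ∀ a, ∀ᵐ ω ∂P, δ ≤ g a ω ∧ g a ω ≤ 1 - δ)
    (Qbar : Bool → Ω → ℝ)
    (hQbar : ∀ a ω, Qbar a ω
      = (P[fun ω' => (if A ω' = a then (1:ℝ) else 0) * Y ω'|mX]) ω / g a ω)
    (Ψ : Ω → ℝ) (hΨ : ∀ ω, Ψ ω = Qbar true ω - Qbar false ω)
    (QbarA : Ω → ℝ)
    (hQbarA : ∀ ω, QbarA ω
      = (if A ω = true then (1:ℝ) else 0) * Qbar true ω
        + (if A ω = false then (1:ℝ) else 0) * Qbar false ω)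
    (gA : Ω → ℝ)
    (hgA : ∀ ω, gA ω
      = (if A ω = true then (1:ℝ) else 0) * g true ω
        + (if A ω = false then (1:ℝ) else 0) * g false ω)
    (Δstar : Ω → ℝ)
    (hΔstar : ∀ ω, Δstar ω
      = ((if A ω = true then (1:ℝ) else 0) / g true ω
          - (if A ω = false then (1:ℝ) else 0) / g false ω) * (Y ω - QbarA ω))
    (σ2 : Bool → Ω → ℝ)
    (hσ2 : ∀ a ω, σ2 a ω
      = (P[fun ω' => (if A ω' = a then (1:ℝ) else 0) * (Y ω' - Qbar a ω') ^ 2|mX]) ω / g a ω)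
    (σ2A : Ω → ℝ)
    (hσ2A : ∀ ω, σ2A ω
      = (if A ω = true then (1:ℝ) else 0) * σ2 true ω
        + (if A ω = false then (1:ℝ) else 0) * σ2 false ω)
    {p : ℕ} (v : 𝒳 → Fin p → ℝ) (hvm : Measurable v) (hvb : ∃ C, ∀ x i, |v x i| ≤ C)
    (G : Matrix (Fin p) (Fin p) ℝ)
    (hG : G = Matrix.of fun i j => ∫ ω, v (X ω) i * v (X ω) j ∂P)
    (hGunit : IsUnit G)
    (β₀ : Fin p → ℝ) (hβ₀ : β₀ = G⁻¹ *ᵥ fun i => ∫ ω, Ψ ω * v (X ω) i ∂P)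
    (Dstar : Ω → Fin p → ℝ)
    (hDstar : ∀ ω, Dstar ω
      = G⁻¹ *ᵥ fun i => (Δstar ω + Ψ ω - β₀ ⬝ᵥ v (X ω)) * v (X ω) i) :
    (Matrix.of fun i j => ∫ ω, Dstar ω i * Dstar ω j ∂P)
      = G⁻¹ *
        (Matrix.of fun i j =>
          ∫ ω, (σ2A ω / gA ω ^ 2 + (Ψ ω - β₀ ⬝ᵥ v (X ω)) ^ 2) * (v (X ω) i * v (X ω) j) ∂P) *
        G⁻¹ := by
  have hm := hmX.trans_le hX.comap_le
  have model := IsNuisance.of_div hm hA hYm hYb hgm hgv hδ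
    (fun a => (hgb a).mono fun _ hω => hω.1) hQbar hσ2
  obtain ⟨Cv, hCv⟩ := hvb
  have hVm : Measurable[mX] fun ω => v (X ω) := hvm.comp (.of_comap_le hmX.ge)
  have hV k : MemLp (fun ω => v (X ω) k) ⊤ P :=
    memLp_top_of_bound (((measurable_pi_apply k).comp hVm).mono hm le_rfl).aestronglyMeasurable
      Cv (ae_of_all _ fun ω => hCv (X ω) k)
  have hrm : Measurable[mX] fun ω => Ψ ω - β₀ ⬝ᵥ v (X ω) := by
    simp only [hΨ]
    exact ((model.measurable_Q true).sub (model.measurable_Q false)).sub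
      ((continuous_const.dotProduct continuous_id).measurable.comp hVm)
  have hr : MemLp (fun ω => Ψ ω - β₀ ⬝ᵥ v (X ω)) ⊤ P := by
    simp only [hΨ]
    exact ((model.memLp_Q true).sub (model.memLp_Q false)).sub (memLp_top_dotProduct β₀ hV)
  have hΔ : Δstar = aipwResidual A Y g Qbar :=
    funext fun ω => by rw [hΔstar, hQbarA, aipwResidual_eq]
  have hσA ω : σ2A ω / gA ω ^ 2 = σ2 (A ω) ω / g (A ω) ω ^ 2 := by
    rw [hσ2A, hgA, ite_mul_add_ite_mul_eq, ite_mul_add_ite_mul_eq]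
  have hU k :
      MemLp (fun ω => (aipwResidual A Y g Qbar ω + (Ψ ω - β₀ ⬝ᵥ v (X ω))) * v (X ω) k) 2 P :=
    ((model.memLp_aipwResidual.add hr).mul_top (hV k)).mono_exponent le_top
  have hGsymm : G.IsSymm := hG ▸ isSymm_secondMoment (μ := P) fun ω => v (X ω)
  change secondMoment P Dstar = _
  simp only [funext hDstar, hΔ, add_sub_assoc, hσA]
  rw [secondMoment_mulVec _ hU, model.secondMoment_aipwResidual_add_mul hrm hr hVm hV,
    hGsymm.inv.eq]
end

section
/- (Score of the targeted Bernoulli fluctuation likelihood equals the efficient influence function.) Assume Y takes values in {0,1} and there is κ > 0 with κ ≤ Q̄^{(a)}(X) ≤ 1 − κ almost surely for a = 0,1. Define W(X) := (Ψ(X) − β₀^⊤ v(X)) v(X), Z(ε) := E_P[exp(ε^⊤ G⁻¹ W(X))], the fluctuated success probability p_ε := logistic( logit(Q̄^{(A)}(X)) + (𝟙{A=1}/g(1,X) − 𝟙{A=0}/g(0,X)) ε^⊤ G⁻¹ v(X) ), and the log-likelihood (up to ε-independent constants) ℓ(ε, O) := Y log p_ε + (1 − Y) log(1 − p_ε) +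 ε^⊤ G⁻¹ W(X) − log Z(ε). Then for P-almost every ω, the map ε ↦ ℓ(ε, O(ω)) is differentiable at ε = 0 with gradient equal to D*(O(ω)). -/
/-!
The score has three parts. The Bernoulli log-likelihood in the logistic parametrisation has
derivative `Y - p` in the linear predictor, and at `ε = 0` the offset `logit Q̄^{(A)}(X)` makes
`p = Q̄^{(A)}(X)`; multiplied by the clever covariate `𝟙{A=1}/g(1,X) − 𝟙{A=0}/g(0,X)` this gives
`Δ* · G⁻¹ v`. The linear term contributes `G⁻¹ W`. Finally `log Z` is the cumulant generating
function of the bounded vector `G⁻¹ W(X)`, so its gradient at `0` is `E[G⁻¹ W(X)]`, which vanishes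
because `β₀` solves the normal equations `G β₀ = E[Ψ v]`: the residual `Ψ - β₀ᵀ v` is orthogonal
to `v`.
-/

open MeasureTheory Matrix Real
open scoped ENNReal

section CumulantGeneratingFunction

variable {Ω E : Type*} {mΩ : MeasurableSpace Ω} {μ : Measure Ω} [NormedAddCommGroup E]

theorem Continuous.comp_memLp_top {F : Type*} [NormedAddCommGroup F] [ProperSpace E] {U : Ω → E}
    {k : E → F} (hk : Continuous k) (hU : MemLp U ∞ μ) : MemLp (fun ω => k (U ω)) ∞ μ := by
  obtain ⟨B, hB⟩ := (isCompact_closedBall (0 : E) (lpNorm U ∞ μ)).exists_bound_of_continuousOn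
    hk.continuousOn
  refine memLp_top_of_bound (hk.comp_aestronglyMeasurable hU.1) B ?_
  filter_upwards [ae_le_lpNorm_exponent_top hU] with ω hω
  exact hB _ (mem_closedBall_zero_iff.mpr hω)

variable [NormedSpace ℝ E] {φ : Ω → StrongDual ℝ E}

theorem hasFDerivAt_integral_exp_apply [IsFiniteMeasure μ] (hφ : MemLp φ ∞ μ) :
    HasFDerivAt (fun x => ∫ ω, exp (φ ω x) ∂μ) (∫ ω, φ ω ∂μ) 0 := by
  set C := lpNorm φ ∞ μ
  have hderiv_le : ∀ᵐ ω ∂μ, ∀ x ∈ Metric.ball (0 : E) 1, ‖exp (φ ω x) • φ ω‖ ≤ exp C * C := by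
    filter_upwards [ae_le_lpNorm_exponent_top hφ] with ω hω x hx
    have hφx : φ ω x ≤ C := calc
      φ ω x ≤ ‖φ ω‖ * ‖x‖ := (le_abs_self _).trans ((φ ω).le_opNorm x)
      _ ≤ C := (mul_le_of_le_one_right (norm_nonneg _) (mem_ball_zero_iff.mp hx).le).trans hω
    rw [norm_smul, norm_of_nonneg (exp_pos _).le]
    exact mul_le_mul (exp_le_exp.mpr hφx) hω (norm_nonneg _) (exp_pos _).le
  have hderiv := hasFDerivAt_integral_of_dominated_of_fderiv_le
    (F := fun x ω => exp (φ ω x)) (F' := fun x ω => exp (φ ω x) • φ ω)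
    (Metric.ball_mem_nhds 0 one_pos)
    (Filter.Eventually.of_forall fun x => continuous_exp.comp_aestronglyMeasurable
      ((ContinuousLinearMap.apply ℝ ℝ x).continuous.comp_aestronglyMeasurable hφ.1))
    (by simp) (by simpa using hφ.1) hderiv_le (integrable_const _)
    (ae_of_all _ fun ω x _ => (φ ω).hasFDerivAt.exp)
  simpa using hderiv

theorem hasFDerivAt_log_integral_exp_apply [IsProbabilityMeasure μ] (hφ : MemLp φ ∞ μ) :
    HasFDerivAt (fun x => log (∫ ω, exp (φ ω x) ∂μ)) (∫ ω, φ ω ∂μ) 0 := by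
  simpa using (hasFDerivAt_integral_exp_apply hφ).log (by simp)

end CumulantGeneratingFunction

section NormalEquations

variable {Ω ι : Type*} {mΩ : MeasurableSpace Ω} {μ : Measure Ω} [Fintype ι]
  {f : Ω → ℝ} {v : Ω → ι → ℝ}

theorem integrable_sub_dotProduct_smul (hf : MemLp f 2 μ) (hv : ∀ i, MemLp (fun ω => v ω i) 2 μ)
    (β : ι → ℝ) : Integrable (fun ω => (f ω - β ⬝ᵥ v ω) • v ω) μ := by
  have hres : MemLp (fun ω => f ω - β ⬝ᵥ v ω) 2 μ :=
    hf.sub (memLp_finsetSum _ fun k _ => (hv k).const_mul (β k))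
  exact Integrable.of_eval fun i => hres.integrable_mul (hv i)

theorem integral_sub_dotProduct_smul_eq_zero (hf : MemLp f 2 μ)
    (hv : ∀ i, MemLp (fun ω => v ω i) 2 μ) {β : ι → ℝ}
    (hβ : (Matrix.of fun i j => ∫ ω, v ω i * v ω j ∂μ) *ᵥ β = fun i => ∫ ω, f ω * v ω i ∂μ) :
    ∫ ω, (f ω - β ⬝ᵥ v ω) • v ω ∂μ = 0 := by
  have hfv : ∀ i, Integrable (fun ω => f ω * v ω i) μ := fun i => hf.integrable_mul (hv i)
  have hvv : ∀ i j, Integrable (fun ω => v ω i * v ω j) μ := fun i j =>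
    (hv i).integrable_mul (hv j)
  have hexpand : ∀ i ω,
      ((f ω - β ⬝ᵥ v ω) • v ω) i = f ω * v ω i - ∑ j, v ω i * v ω j * β j := by
    intro i ω
    simp only [Pi.smul_apply, smul_eq_mul, dotProduct, sub_mul, Finset.sum_mul]
    exact congrArg _ (Finset.sum_congr rfl fun j _ => by ring)
  ext i
  rw [eval_integral (integrable_sub_dotProduct_smul hf hv β).eval, Pi.zero_apply]
  calc ∫ ω, ((f ω - β ⬝ᵥ v ω) • v ω) i ∂μ
      = ∫ ω, f ω * v ω i ∂μ - ∑ j, (∫ ω, v ω i * v ω j ∂μ) * β j := by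
        simp only [hexpand]
        rw [integral_sub (hfv i) (integrable_finsetSum _ fun j _ => (hvv i j).mul_const _),
          integral_finsetSum _ fun j _ => (hvv i j).mul_const _]
        simp only [integral_mul_const]
    _ = 0 := by rw [sub_eq_zero, ← congrFun hβ i]; rfl

end NormalEquations

namespace Matrix

variable {m n : Type*} [Fintype m] [Fintype n] [DecidableEq m] [DecidableEq n]

noncomputable def mulVecDual (M : Matrix m n ℝ) : (n → ℝ) →L[ℝ] StrongDual ℝ (m → ℝ) :=
  LinearMap.toContinuousLinearMap
    (LinearMap.toContinuousLinearMap.toLinearMap ∘ₗ (toLinearMap₂' ℝ M).flip)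

@[simp]
theorem mulVecDual_apply (M : Matrix m n ℝ) (w : n → ℝ) (u : m → ℝ) :
    M.mulVecDual w u = u ⬝ᵥ M *ᵥ w := by
  simp [mulVecDual, toLinearMap₂'_apply']

end Matrix

theorem hasFDerivAt_log_integral_exp_residual {Ω ι m : Type*} {mΩ : MeasurableSpace Ω}
    {μ : Measure Ω} [IsProbabilityMeasure μ] [Fintype ι] [DecidableEq ι] [Fintype m]
    [DecidableEq m] {f : Ω → ℝ} {v : Ω → ι → ℝ} (hf : MemLp f ∞ μ) (hv : MemLp v ∞ μ)
    {β : ι → ℝ}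
    (hβ : (Matrix.of fun i j => ∫ ω, v ω i * v ω j ∂μ) *ᵥ β = fun i => ∫ ω, f ω * v ω i ∂μ)
    (M : Matrix m ι ℝ) :
    HasFDerivAt (fun ε : m → ℝ => log (∫ ω, exp (ε ⬝ᵥ M *ᵥ ((f ω - β ⬝ᵥ v ω) • v ω)) ∂μ))
      (0 : StrongDual ℝ (m → ℝ)) 0 := by
  have hf2 : MemLp f 2 μ := hf.mono_exponent le_top
  have hv2 : ∀ i, MemLp (fun ω => v ω i) 2 μ := fun i => (hv.eval i).mono_exponent le_top
  have hφ : MemLp (fun ω => M.mulVecDual ((f ω - β ⬝ᵥ v ω) • v ω)) ∞ μ :=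
    Continuous.comp_memLp_top (U := fun ω => (f ω, v ω))
      (k := fun z => M.mulVecDual ((z.1 - β ⬝ᵥ z.2) • z.2)) (by fun_prop)
      (MemLp.of_fst_snd ⟨hf, hv⟩)
  have hderiv := hasFDerivAt_log_integral_exp_apply hφ
  rw [ContinuousLinearMap.integral_comp_comm _ (integrable_sub_dotProduct_smul hf2 hv2 β),
    integral_sub_dotProduct_smul_eq_zero hf2 hv2 hβ, map_zero] at hderiv
  simpa only [mulVecDual_apply] using hderiv

section Logistic

noncomputable def logisticLogLik (y t : ℝ) : ℝ :=
  y * log (sigmoid t) + (1 - y) * log (1 - sigmoid t)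

theorem hasDerivAt_logisticLogLik (y t : ℝ) :
    HasDerivAt (logisticLogLik y) (y - sigmoid t) t := by
  have hσ0 := (sigmoid_pos t).ne'
  have hσ1 := (sub_pos.mpr (sigmoid_lt_one t)).ne'
  refine ((((hasDerivAt_sigmoid t).log hσ0).const_mul y).add
    ((((hasDerivAt_sigmoid t).const_sub 1).log hσ1).const_mul (1 - y))).congr_deriv ?_
  field_simp
  ring

theorem hasFDerivAt_logisticLogLik_add_mul {E : Type*} [NormedAddCommGroup E] [NormedSpace ℝ E]
    (y a H : ℝ) (L : StrongDual ℝ E) :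
    HasFDerivAt (fun x => logisticLogLik y (a + H * L x)) (((y - sigmoid a) * H) • L) 0 := by
  have h := (hasDerivAt_logisticLogLik y (a + H * L 0)).comp_hasFDerivAt 0
    ((L.hasFDerivAt.const_mul H).const_add a)
  rwa [map_zero, mul_zero, add_zero, smul_smul] at h

theorem sigmoid_log_div_one_sub {q : ℝ} (h0 : 0 < q) (h1 : q < 1) :
    sigmoid (log (q / (1 - q))) = q := by
  rw [sigmoid_def, exp_neg, exp_log (div_pos h0 (sub_pos.mpr h1))]
  field_simp
  ring

end Logistic

/-- (Score of the targeted Bernoulli fluctuation likelihood equals the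
efficient influence function.) Assume `Y ∈ {0,1}` and `κ ≤ Q̄^{(a)}(X) ≤ 1 − κ` a.s. With
`W(X) := (Ψ(X) − β₀ᵀ v(X)) v(X)`, `Z(ε) := E_P[exp(εᵀ G⁻¹ W(X))]`, fluctuated success
probability `p_ε := logistic(logit(Q̄^{(A)}(X)) + (𝟙{A=1}/g(1,X) − 𝟙{A=0}/g(0,X)) εᵀ G⁻¹ v(X))`,
and log-likelihood `ℓ(ε,O) := Y log p_ε + (1−Y) log(1−p_ε) + εᵀ G⁻¹ W(X) − log Z(ε)`, for
`P`-a.e. `ω` the map `ε ↦ ℓ(ε, O(ω))` is differentiable at `ε = 0` with gradient `D*(O(ω))`. -/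
theorem stmt_15
    {Ω 𝒳 : Type*} [MeasurableSpace Ω] [MeasurableSpace 𝒳]
    (P : Measure Ω) [IsProbabilityMeasure P]
    (X : Ω → 𝒳) (hX : Measurable X)
    (A : Ω → Bool) (hA : Measurable A)
    (Y : Ω → ℝ) (hYm : Measurable Y) (hY01 : ∀ ω, Y ω = 0 ∨ Y ω = 1)
    (mX : MeasurableSpace Ω) (hmX : mX = MeasurableSpace.comap X inferInstance)
    (g : Bool → Ω → ℝ) (hgm : ∀ a, Measurable[mX] (g a))
    (hgv : ∀ a, g a =ᵐ[P] P[fun ω => if A ω = a then (1:ℝ) else 0|mX])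
    (δ : ℝ) (hδ : 0 < δ) (hgb : ∀ a, ∀ᵐ ω ∂P, δ ≤ g a ω ∧ g a ω ≤ 1 - δ)
    (Qbar : Bool → Ω → ℝ)
    (hQbar : ∀ a ω, Qbar a ω
      = (P[fun ω' => (if A ω' = a then (1:ℝ) else 0) * Y ω'|mX]) ω / g a ω)
    (κ : ℝ) (hκ : 0 < κ)
    (hQκ : ∀ a, ∀ᵐ ω ∂P, κ ≤ Qbar a ω ∧ Qbar a ω ≤ 1 - κ)
    (Ψ : Ω → ℝ) (hΨ : ∀ ω, Ψ ω = Qbar true ω - Qbar false ω)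
    (QbarA : Ω → ℝ)
    (hQbarA : ∀ ω, QbarA ω
      = (if A ω = true then (1:ℝ) else 0) * Qbar true ω
        + (if A ω = false then (1:ℝ) else 0) * Qbar false ω)
    (Δstar : Ω → ℝ)
    (hΔstar : ∀ ω, Δstar ω
      = ((if A ω = true then (1:ℝ) else 0) / g true ω
          - (if A ω = false then (1:ℝ) else 0) / g false ω) * (Y ω - QbarA ω))
    {p : ℕ} (v : 𝒳 → Fin p → ℝ) (hvm : Measurable v) (hvb : ∃ C, ∀ x i, |v x i| ≤ C)
    (G : Matrix (Fin p) (Fin p) ℝ)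
    (hG : G = Matrix.of fun i j => ∫ ω, v (X ω) i * v (X ω) j ∂P)
    (hGunit : IsUnit G)
    (β₀ : Fin p → ℝ) (hβ₀ : β₀ = G⁻¹ *ᵥ fun i => ∫ ω, Ψ ω * v (X ω) i ∂P)
    (Dstar : Ω → Fin p → ℝ)
    (hDstar : ∀ ω, Dstar ω
      = G⁻¹ *ᵥ fun i => (Δstar ω + Ψ ω - β₀ ⬝ᵥ v (X ω)) * v (X ω) i)
    (W : Ω → Fin p → ℝ)
    (hW : ∀ ω, W ω = fun i => (Ψ ω - β₀ ⬝ᵥ v (X ω)) * v (X ω) i)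
    (Z : (Fin p → ℝ) → ℝ)
    (hZ : ∀ ε, Z ε = ∫ ω, Real.exp (ε ⬝ᵥ (G⁻¹ *ᵥ W ω)) ∂P)
    (pfl : (Fin p → ℝ) → Ω → ℝ)
    (hpfl : ∀ ε ω, pfl ε ω
      = (1 + Real.exp (-(Real.log (QbarA ω / (1 - QbarA ω)) +
          ((if A ω = true then (1:ℝ) else 0) / g true ω
            - (if A ω = false then (1:ℝ) else 0) / g false ω) *
          (ε ⬝ᵥ (G⁻¹ *ᵥ v (X ω))))))⁻¹)
    (ℓ : (Fin p → ℝ) → Ω → ℝ)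
    (hℓ : ∀ ε ω, ℓ ε ω
      = Y ω * Real.log (pfl ε ω) + (1 - Y ω) * Real.log (1 - pfl ε ω)
        + ε ⬝ᵥ (G⁻¹ *ᵥ W ω) - Real.log (Z ε)) :
    ∀ᵐ ω ∂P, ∃ L : (Fin p → ℝ) →L[ℝ] ℝ,
      HasFDerivAt (fun ε => ℓ ε ω) L 0 ∧ ∀ u, L u = u ⬝ᵥ Dstar ω := by
  have hQ : ∀ a, MemLp (Qbar a) ∞ P := fun a => by
    refine memLp_top_of_bound ?_ 1
      ((hQκ a).mono fun ω hω => abs_le.mpr ⟨by linarith, by linarith⟩)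
    rw [funext (hQbar a)]
    exact integrable_condExp.aestronglyMeasurable.div₀
      (integrable_condExp.aestronglyMeasurable.congr (hgv a).symm)
  obtain ⟨C, hC⟩ := hvb
  have hv : MemLp (fun ω => v (X ω)) ∞ P := MemLp.of_eval fun i =>
    memLp_top_of_bound ((measurable_pi_apply i).comp (hvm.comp hX)).aestronglyMeasurable C
      (ae_of_all _ fun ω => hC (X ω) i)
  have hGβ : G *ᵥ β₀ = fun i => ∫ ω, Ψ ω * v (X ω) i ∂P := by
    rw [hβ₀, mulVec_mulVec, mul_nonsing_inv _ ((isUnit_iff_isUnit_det G).mp hGunit), one_mulVec]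
  have hlogZ : HasFDerivAt (fun ε => Real.log (Z ε)) (0 : StrongDual ℝ (Fin p → ℝ)) 0 := by
    rw [funext hZ, show W = fun ω => (Ψ ω - β₀ ⬝ᵥ v (X ω)) • v (X ω) from funext hW]
    exact hasFDerivAt_log_integral_exp_residual
      (funext hΨ ▸ (hQ true).sub (hQ false)) hv (hG ▸ hGβ) G⁻¹
  filter_upwards [hQκ true, hQκ false] with ω h1 h2
  have hq : 0 < QbarA ω ∧ QbarA ω < 1 := by
    rw [hQbarA]
    cases A ω <;> simp <;> constructor <;> linarith
  set H := (if A ω = true then (1:ℝ) else 0) / g true ω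
    - (if A ω = false then (1:ℝ) else 0) / g false ω with hH
  have hℓω : (fun ε => ℓ ε ω) = fun ε => logisticLogLik (Y ω)
      (Real.log (QbarA ω / (1 - QbarA ω)) + H * G⁻¹.mulVecDual (v (X ω)) ε)
      + G⁻¹.mulVecDual (W ω) ε - Real.log (Z ε) := by
    funext ε
    rw [hℓ, hpfl, ← hH]
    simp only [logisticLogLik, sigmoid_def, mulVecDual_apply]
  refine ⟨G⁻¹.mulVecDual (Δstar ω • v (X ω) + W ω), hℓω ▸ ?_, fun u => ?_⟩
  · refine (((hasFDerivAt_logisticLogLik_add_mul _ _ _ _).add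
      (G⁻¹.mulVecDual (W ω)).hasFDerivAt).sub hlogZ).congr_fderiv ?_
    rw [map_add, map_smul, hΔstar, ← hH, sigmoid_log_div_one_sub hq.1 hq.2, sub_zero, mul_comm]
  · rw [mulVecDual_apply, hDstar, hW]
    congr
    ext i
    simp only [Pi.add_apply, Pi.smul_apply, smul_eq_mul]
    ring
end
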